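/- arXiv:1606.06929 — 6 statements merged into one kernel-verified Lean document; each statement's English description precedes it below -/
import Mathlib

section
/- The set of nonnegative integers can be partitioned into two disjoint subsets C and D (with C ∪ D = ℕ and C ∩ D = ∅) such that R_C(n) = R_D(n) for every positive integer n. -/
/-!
Let `t i = ±1` according as `i ∈ A` or not. Then
`1_A i * 1_A j - 1_B i * 1_B j = (t i + t j) / 2`, so summing over the pairs `i + j = n` and
splitting them into `i < j`, `i > j` and `i = j` gives
`2 (R A n - R B n) = ∑_{i ≤ n} t i - [n even] t (n / 2)`. Since `t (2k+1) = -t (2k)`, the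
partial sums of `t` vanish up to odd `n` and equal `t (2m) = t m` up to `n = 2m`, so the right
side is zero.
-/

/-- `R S n` is the number of unordered representations of `n` as `s + s'`
with `s, s' ∈ S` and `s < s'`. -/
noncomputable def R (S : Set ℕ) (n : ℕ) : ℕ :=
  {p : ℕ × ℕ | p.1 ∈ S ∧ p.2 ∈ S ∧ p.1 < p.2 ∧ p.1 + p.2 = n}.ncard

/-- The Thue–Morse set: nonnegative integers with an even number of
`1` digits in binary. -/
def A : Set ℕ := {n | Even ((Nat.digits 2 n).sum)}

/-- The complement of the Thue–Morse set. -/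
def B : Set ℕ := Aᶜ

open Finset

theorem sum_eq_two_nsmul_sum_lt_add_sum_diag {α M : Type*} [LinearOrder α] [AddCommMonoid M]
    (s : Finset (α × α)) (hs : ∀ p ∈ s, p.swap ∈ s) (f : α × α → M)
    (hf : ∀ p, f p.swap = f p) :
    ∑ p ∈ s, f p = 2 • ∑ p ∈ s with p.1 < p.2, f p + ∑ p ∈ s with p.1 = p.2, f p := by
  have hgt : ∑ p ∈ s with p.2 < p.1, f p = ∑ p ∈ s with p.1 < p.2, f p :=
    sum_nbij' Prod.swap Prod.swap (by simp +contextual [hs]) (by simp +contextual [hs])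
      (by simp) (by simp) (fun p _ => (hf p).symm)
  have hge : ∑ p ∈ s with ¬p.1 < p.2, f p
      = ∑ p ∈ s with p.2 < p.1, f p + ∑ p ∈ s with p.1 = p.2, f p := by
    rw [← sum_filter_add_sum_filter_not _ (fun p => p.2 < p.1), filter_filter, filter_filter]
    congr 2 <;> ext p <;> simp only [mem_filter] <;> grind
  rw [two_nsmul, ← sum_filter_add_sum_filter_not s (fun p => p.1 < p.2), hge, hgt, add_assoc]

theorem sum_antidiagonal_add_eq_two_nsmul_sum_range {M : Type*} [AddCommMonoid M] (f : ℕ → M)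
    (n : ℕ) : ∑ p ∈ antidiagonal n, (f p.1 + f p.2) = 2 • ∑ i ∈ range (n + 1), f i := by
  have hsnd : ∑ p ∈ antidiagonal n, f p.2 = ∑ p ∈ antidiagonal n, f p.1 :=
    Nat.sum_antidiagonal_swap (f := fun p => f p.1)
  have hfst : ∑ p ∈ antidiagonal n, f p.1 = ∑ i ∈ range (n + 1), f i :=
    Nat.sum_antidiagonal_eq_sum_range_succ_mk _ n
  rw [sum_add_distrib, hsnd, hfst, two_nsmul]

section Indicator

variable {α M : Type*} [Ring M] (S : Set α) (i j : α)

theorem two_mul_indicator_mul_sub_compl :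
    2 * (S.indicator (1 : α → M) i * S.indicator 1 j - Sᶜ.indicator 1 i * Sᶜ.indicator 1 j)
      = (S.indicator 1 i - Sᶜ.indicator 1 i) + (S.indicator 1 j - Sᶜ.indicator 1 j) := by
  by_cases hi : i ∈ S <;> by_cases hj : j ∈ S <;> simp [hi, hj] <;> norm_num

theorem indicator_mul_self_sub_compl :
    S.indicator (1 : α → M) i * S.indicator 1 i - Sᶜ.indicator 1 i * Sᶜ.indicator 1 i
      = S.indicator 1 i - Sᶜ.indicator 1 i := by
  by_cases hi : i ∈ S <;> simp [hi]

end Indicator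

theorem R_eq_sum_indicator_mul (S : Set ℕ) (n : ℕ) :
    (R S n : ℤ)
      = ∑ p ∈ antidiagonal n with p.1 < p.2, S.indicator 1 p.1 * S.indicator 1 p.2 := by
  classical
  have : R S n = #{p ∈ antidiagonal n | p.1 < p.2 ∧ p.1 ∈ S ∧ p.2 ∈ S} := by
    rw [R, ← Set.ncard_coe_finset]
    congr 1
    ext p
    simp only [Set.mem_ofPred_eq, coe_filter, HasAntidiagonal.mem_antidiagonal]
    tauto
  rw [this, ← filter_filter, card_filter, sum_filter, sum_filter]
  push_cast
  refine sum_congr rfl fun p _ => ?_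
  by_cases h1 : p.1 ∈ S <;> by_cases h2 : p.2 ∈ S <;> simp [h1, h2]

theorem two_mul_mem_A_iff (k : ℕ) : 2 * k ∈ A ↔ k ∈ A := by
  rcases eq_or_ne k 0 with rfl | hk
  · rfl
  · simp [A, Nat.digits_def' one_lt_two (by omega : 0 < 2 * k)]

theorem two_mul_add_one_mem_A_iff (k : ℕ) : 2 * k + 1 ∈ A ↔ k ∉ A := by
  simp [A, show (2 * k + 1) / 2 = k by omega, Nat.even_add_one, add_comm 1]

noncomputable def thueMorseSign (n : ℕ) : ℤ := A.indicator 1 n - Aᶜ.indicator 1 n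

theorem thueMorseSign_two_mul (k : ℕ) : thueMorseSign (2 * k) = thueMorseSign k := by
  by_cases hk : k ∈ A <;> simp [thueMorseSign, two_mul_mem_A_iff, hk]

theorem thueMorseSign_two_mul_add_one (k : ℕ) :
    thueMorseSign (2 * k + 1) = -thueMorseSign k := by
  by_cases hk : k ∈ A <;> simp [thueMorseSign, two_mul_add_one_mem_A_iff, hk]

theorem sum_range_two_mul_thueMorseSign (m : ℕ) :
    ∑ i ∈ range (2 * m), thueMorseSign i = 0 := by
  induction m with
  | zero => rfl
  | succ m ih =>
    rw [mul_add_one, sum_range_succ, sum_range_succ, ih, thueMorseSign_two_mul,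
      thueMorseSign_two_mul_add_one, zero_add, add_neg_cancel]

theorem sum_range_succ_thueMorseSign (n : ℕ) :
    ∑ i ∈ range (n + 1), thueMorseSign i
      = ∑ p ∈ antidiagonal n with p.1 = p.2, thueMorseSign p.1 := by
  obtain ⟨m, rfl | rfl⟩ := Nat.even_or_odd' n
  · have : {p ∈ antidiagonal (2 * m) | p.1 = p.2} = {(m, m)} := by
      ext ⟨a, b⟩
      simp only [mem_filter, HasAntidiagonal.mem_antidiagonal, mem_singleton, Prod.mk.injEq]
      omega
    rw [this, sum_range_succ, sum_range_two_mul_thueMorseSign, thueMorseSign_two_mul, zero_add,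
      sum_singleton]
  · have : {p ∈ antidiagonal (2 * m + 1) | p.1 = p.2} = ∅ := by
      ext ⟨a, b⟩
      simp only [mem_filter, HasAntidiagonal.mem_antidiagonal, notMem_empty, iff_false]
      omega
    rw [this, sum_empty, show 2 * m + 1 + 1 = 2 * (m + 1) by ring,
      sum_range_two_mul_thueMorseSign]

theorem R_A_eq_R_B (n : ℕ) : R A n = R B n := by
  set f : ℕ × ℕ → ℤ := fun p =>
    A.indicator 1 p.1 * A.indicator 1 p.2 - Aᶜ.indicator 1 p.1 * Aᶜ.indicator 1 p.2 with hf
  have hR : (R A n : ℤ) - R B n = ∑ p ∈ antidiagonal n with p.1 < p.2, f p := by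
    rw [B, R_eq_sum_indicator_mul, R_eq_sum_indicator_mul, sum_sub_distrib]
  have hsplit := sum_eq_two_nsmul_sum_lt_add_sum_diag (antidiagonal n)
    (fun _ => HasAntidiagonal.swap_mem_antidiagonal.2) f
    (fun p => by simp only [hf, Prod.fst_swap, Prod.snd_swap, mul_comm])
  have htotal :
      2 * ∑ p ∈ antidiagonal n, f p = 2 • ∑ i ∈ range (n + 1), thueMorseSign i := by
    rw [mul_sum, ← sum_antidiagonal_add_eq_two_nsmul_sum_range]
    exact sum_congr rfl fun p _ => two_mul_indicator_mul_sub_compl A p.1 p.2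
  have hdiag : ∑ p ∈ antidiagonal n with p.1 = p.2, f p
      = ∑ p ∈ antidiagonal n with p.1 = p.2, thueMorseSign p.1 :=
    sum_congr rfl fun p hp => by
      simp only [hf, ← (mem_filter.1 hp).2]
      exact indicator_mul_self_sub_compl A p.1
  rw [sum_range_succ_thueMorseSign, ← hdiag, hsplit, two_nsmul, two_nsmul, ← hR] at htotal
  omega

theorem dombi_partition :
    ∃ C D : Set ℕ, C ∪ D = Set.univ ∧ C ∩ D = ∅ ∧
      ∀ n : ℕ, 0 < n → R C n = R D n :=
  ⟨A, B, Set.union_compl_self A, Set.inter_compl_self A, fun n _ => R_A_eq_R_B n⟩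
end

section
/- Let C and D be sets of nonnegative integers such that C ∪ D = ℕ, C ∩ D = ∅, and 0 ∈ C. Then R_C(n) = R_D(n) for every positive integer n if and only if C = A and D = B. -/
open Finset

/-- Thue–Morse indicator. -/
def tm (n : ℕ) : ℕ := if Even ((Nat.digits 2 n).sum) then 1 else 0

lemma tm_zero : tm 0 = 1 := by simp [tm]

lemma tm_two_mul (k : ℕ) : tm (2 * k) = tm k := by
  rcases Nat.eq_zero_or_pos k with rfl | hk
  · rfl
  · unfold tm
    rw [Nat.digits_def' (by norm_num : 1 < 2) (by omega)]
    simp [Nat.mul_div_cancel_left, Nat.mul_mod_right]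

lemma tm_two_mul_add_one (k : ℕ) : tm (2 * k + 1) + tm k = 1 := by
  unfold tm
  rw [Nat.digits_def' (by norm_num : 1 < 2) (by omega)]
  have h1 : (2 * k + 1) % 2 = 1 := by omega
  have h2 : (2 * k + 1) / 2 = k := by omega
  rw [h1, h2]
  rcases Nat.even_or_odd ((Nat.digits 2 k).sum) with h | h
  · have h2' : ¬ Even ((1 :: Nat.digits 2 k).sum) := by
      simp only [List.sum_cons]
      rw [add_comm, Nat.even_add_one]
      simpa using h
    rw [if_neg h2', if_pos h]
  · have h1' : Even ((1 :: Nat.digits 2 k).sum) := by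
      simp only [List.sum_cons]
      rw [add_comm, Nat.even_add_one]
      exact Nat.not_even_iff_odd.mpr h
    rw [if_pos h1', if_neg (Nat.not_even_iff_odd.mpr h)]

lemma tm_one : tm 1 = 0 := by
  unfold tm
  rw [Nat.digits_def' (by norm_num : 1 < 2) one_pos]
  norm_num

/-- The key counting property satisfied by the Thue–Morse indicator. -/
lemma tm_prop : ∀ n, 0 < n →
    ∑ i ∈ range (n + 1), tm i = (n + 1) / 2 + (if Even n then tm (n / 2) else 0) := by
  intro n
  induction n with
  | zero => omega
  | succ n ih =>
    intro _
    rcases Nat.eq_zero_or_pos n with rfl | hn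
    · rw [Finset.sum_range_succ, Finset.sum_range_one, tm_zero, tm_one]
      norm_num
    · have hih := ih hn
      rw [Finset.sum_range_succ, hih]
      rcases Nat.even_or_odd n with he | ho
      · obtain ⟨k, hk⟩ := he
        have hk' : n = 2 * k := by omega
        subst hk'
        have h1 : Even (2 * k) := ⟨k, by omega⟩
        have h2 : ¬ Even (2 * k + 1) := by simp [Nat.even_add_one]
        rw [if_pos h1, if_neg h2]
        have h3 := tm_two_mul_add_one k
        have hd : (2 * k) / 2 = k := by omega
        rw [hd]
        omega
      · obtain ⟨k, hk⟩ := ho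
        subst hk
        have h1 : ¬ Even (2 * k + 1) := by simp [Nat.even_add_one]
        have h2 : Even (2 * k + 1 + 1) := ⟨k + 1, by omega⟩
        rw [if_neg h1, if_pos h2]
        have ht : tm (2 * k + 1 + 1) = tm (k + 1) := by
          rw [show 2 * k + 1 + 1 = 2 * (k + 1) from by ring, tm_two_mul]
        have hd : (2 * k + 1 + 1) / 2 = k + 1 := by omega
        rw [ht, hd]
        omega

/-- Splitting a sum over `range (n+1)` into the low half, the reflected high half,
and possibly the middle term. -/
lemma sum_split (χ : ℕ → ℕ) (n : ℕ) :
    ∑ i ∈ range (n + 1), χ i =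
      (∑ i ∈ range ((n + 1) / 2), χ i) + (∑ i ∈ range ((n + 1) / 2), χ (n - i)) +
        (if Even n then χ (n / 2) else 0) := by
  rcases Nat.even_or_odd n with ⟨k, hk⟩ | ⟨k, hk⟩
  · have hn : n = 2 * k := by omega
    subst hn
    have hm : (2 * k + 1) / 2 = k := by omega
    have hd : 2 * k / 2 = k := by omega
    rw [hm, hd, if_pos ⟨k, by omega⟩]
    simp only [Finset.range_eq_Ico]
    have hsplit : ∑ i ∈ Ico 0 (k + 1), χ i + ∑ i ∈ Ico (k + 1) (2 * k + 1), χ i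
        = ∑ i ∈ Ico 0 (2 * k + 1), χ i :=
      Finset.sum_Ico_consecutive _ (by omega) (by omega)
    have hrefl := Finset.sum_Ico_reflect χ 0 (show k ≤ 2 * k + 1 from by omega)
    rw [show 2 * k + 1 - k = k + 1 from by omega, Nat.sub_zero] at hrefl
    rw [hrefl, ← hsplit, Finset.sum_Ico_succ_top (by omega : 0 ≤ k)]
    omega
  · subst hk
    have hm : (2 * k + 1 + 1) / 2 = k + 1 := by omega
    have h2 : ¬ Even (2 * k + 1) := by simp [Nat.even_add_one]
    rw [hm, if_neg h2, add_zero]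
    simp only [Finset.range_eq_Ico]
    have hsplit : ∑ i ∈ Ico 0 (k + 1), χ i + ∑ i ∈ Ico (k + 1) (2 * k + 1 + 1), χ i
        = ∑ i ∈ Ico 0 (2 * k + 1 + 1), χ i :=
      Finset.sum_Ico_consecutive _ (by omega) (by omega)
    have hrefl := Finset.sum_Ico_reflect χ 0 (show k + 1 ≤ 2 * k + 1 + 1 from by omega)
    rw [show 2 * k + 1 + 1 - (k + 1) = k + 1 from by omega, Nat.sub_zero] at hrefl
    rw [hrefl, ← hsplit]

open Classical in
/-- `R S n` as a cardinality of a filtered finset. -/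
lemma R_eq_card (S : Set ℕ) (n : ℕ) :
    R S n = ((range ((n + 1) / 2)).filter (fun i => i ∈ S ∧ n - i ∈ S)).card := by
  classical
  have hset : {p : ℕ × ℕ | p.1 ∈ S ∧ p.2 ∈ S ∧ p.1 < p.2 ∧ p.1 + p.2 = n} =
      ↑(((range ((n + 1) / 2)).filter (fun i => i ∈ S ∧ n - i ∈ S)).image
        (fun i => (i, n - i))) := by
    ext p
    simp only [Set.mem_setOf_eq, Finset.coe_image, Set.mem_image, Finset.mem_coe,
      Finset.mem_filter, Finset.mem_range]
    constructor
    · rintro ⟨h1, h2, h3, h4⟩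
      refine ⟨p.1, ⟨by omega, h1, ?_⟩, ?_⟩
      · have h : n - p.1 = p.2 := by omega
        rw [h]; exact h2
      · have h : n - p.1 = p.2 := by omega
        rw [h]
    · rintro ⟨i, ⟨hi, his, hnis⟩, rfl⟩
      exact ⟨his, hnis, by omega, by omega⟩
  rw [R, hset, Set.ncard_coe_finset, Finset.card_image_of_injective]
  intro a b h
  exact congrArg Prod.fst h

open Classical in
/-- The representation-function equality is equivalent to a partial-sum identity. -/
lemma R_equiv (C D : Set ℕ) (hD : ∀ x, x ∈ D ↔ x ∉ C) (n : ℕ) :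
    R C n = R D n ↔
      ∑ i ∈ range (n + 1), (if i ∈ C then 1 else 0) =
        (n + 1) / 2 + (if Even n then (if n / 2 ∈ C then 1 else 0) else 0) := by
  classical
  set χ : ℕ → ℕ := fun x => if x ∈ C then 1 else 0 with hχ
  set χ' : ℕ → ℕ := fun x => if x ∈ D then 1 else 0 with hχ'
  set m := (n + 1) / 2 with hm
  have key : ∀ i ∈ range m,
      (if i ∈ C ∧ n - i ∈ C then (1:ℕ) else 0) + χ' i + χ' (n - i) =
      (if i ∈ D ∧ n - i ∈ D then (1:ℕ) else 0) + 1 := by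
    intro i _
    by_cases h1 : i ∈ C <;> by_cases h2 : n - i ∈ C <;>
      simp [hχ', hD, h1, h2]
  have hsum := Finset.sum_congr rfl key
  rw [Finset.sum_add_distrib, Finset.sum_add_distrib, Finset.sum_add_distrib] at hsum
  have hRC : R C n = ∑ i ∈ range m, (if i ∈ C ∧ n - i ∈ C then (1:ℕ) else 0) := by
    rw [R_eq_card, Finset.card_filter, ← hm]
  have hRD : R D n = ∑ i ∈ range m, (if i ∈ D ∧ n - i ∈ D then (1:ℕ) else 0) := by
    rw [R_eq_card, Finset.card_filter, ← hm]
  have hcompl1 : ∑ i ∈ range m, χ i + ∑ i ∈ range m, χ' i = m := by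
    rw [← Finset.sum_add_distrib]
    have h : ∀ i ∈ range m, χ i + χ' i = 1 := by
      intro i _
      by_cases h : i ∈ C <;> simp [hχ, hχ', hD, h]
    rw [Finset.sum_congr rfl h, Finset.sum_const, smul_eq_mul, mul_one,
      Finset.card_range]
  have hcompl2 : ∑ i ∈ range m, χ (n - i) + ∑ i ∈ range m, χ' (n - i) = m := by
    rw [← Finset.sum_add_distrib]
    have h : ∀ i ∈ range m, χ (n - i) + χ' (n - i) = 1 := by
      intro i _
      by_cases h : n - i ∈ C <;> simp [hχ, hχ', hD, h]
    rw [Finset.sum_congr rfl h, Finset.sum_const, smul_eq_mul, mul_one,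
      Finset.card_range]
  have hconst : ∑ _i ∈ range m, (1:ℕ) = m := by simp
  have hsplit := sum_split χ n
  rw [← hm] at hsplit
  have hmid : (if Even n then (if n / 2 ∈ C then (1:ℕ) else 0) else 0)
      = (if Even n then χ (n / 2) else 0) := rfl
  rw [hmid]
  rw [hconst] at hsum
  rw [← hRC, ← hRD] at hsum
  rw [hsplit]
  constructor
  · intro h
    omega
  · intro h
    omega

theorem partition_iff_thueMorse (C D : Set ℕ)
    (hU : C ∪ D = Set.univ) (hI : C ∩ D = ∅) (h0 : (0 : ℕ) ∈ C) :
    (∀ n : ℕ, 0 < n → R C n = R D n) ↔ (C = A ∧ D = B) := by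
  classical
  have hD : ∀ x, x ∈ D ↔ x ∉ C := by
    intro x
    constructor
    · intro hx hc
      have h : x ∈ C ∩ D := ⟨hc, hx⟩
      rw [hI] at h
      exact h
    · intro hx
      have h : x ∈ C ∪ D := by rw [hU]; trivial
      rw [Set.mem_union] at h
      exact h.resolve_left hx
  set χ : ℕ → ℕ := fun x => if x ∈ C then 1 else 0 with hχ
  constructor
  · intro h
    have hprop : ∀ n, 0 < n →
        ∑ i ∈ range (n + 1), χ i =
          (n + 1) / 2 + (if Even n then χ (n / 2) else 0) := by
      intro n hn
      exact (R_equiv C D hD n).1 (h n hn)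
    have htm : ∀ n, χ n = tm n := by
      intro n
      induction n using Nat.strong_induction_on with
      | _ n ih =>
        rcases Nat.eq_zero_or_pos n with rfl | hn
        · simp [hχ, h0, tm_zero]
        · have h1 := hprop n hn
          have h2 := tm_prop n hn
          rw [Finset.sum_range_succ] at h1 h2
          have hsum : ∑ i ∈ range n, χ i = ∑ i ∈ range n, tm i :=
            Finset.sum_congr rfl fun i hi => ih i (Finset.mem_range.1 hi)
          have hhalf : χ (n / 2) = tm (n / 2) := ih (n / 2) (by omega)
          rw [hsum] at h1
          by_cases he : Even n
          · rw [if_pos he] at h1 h2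
            omega
          · rw [if_neg he] at h1 h2
            omega
    have hCA : C = A := by
      ext x
      have hx := htm x
      simp only [hχ, tm] at hx
      constructor
      · intro hc
        rw [if_pos hc] at hx
        show Even ((Nat.digits 2 x).sum)
        by_contra hcon
        rw [if_neg hcon] at hx
        omega
      · intro hA
        have hA' : Even ((Nat.digits 2 x).sum) := hA
        rw [if_pos hA'] at hx
        by_contra hc
        rw [if_neg hc] at hx
        omega
    refine ⟨hCA, ?_⟩
    ext x
    rw [hD x, B, Set.mem_compl_iff, hCA]
  · rintro ⟨rfl, rfl⟩
    intro n hn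
    rw [R_equiv A B hD n]
    have h2 := tm_prop n hn
    have hall : ∀ i, (if i ∈ A then (1:ℕ) else 0) = tm i := by
      intro i
      by_cases hi : Even ((Nat.digits 2 i).sum)
      · rw [if_pos (show i ∈ A from hi)]
        simp [tm, hi]
      · rw [if_neg (show i ∉ A from hi)]
        simp [tm, hi]
    simp only [hall]
    exact h2
end

section
/- Let k ≥ 2 be an integer. If C and D are sets of nonnegative integers with C ∪ D = ℕ and C ∩ D = kℕ (the set of nonnegative multiples of k), then R_C(n) ≠ R_D(n) for infinitely many positive integers n. -/
section TangAux

open Finset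

open Classical in
/-- Integer indicator of a set of naturals. -/
noncomputable def tInd (S : Set ℕ) (m : ℕ) : ℤ := if m ∈ S then 1 else 0

lemma tInd_mem {S : Set ℕ} {m : ℕ} (h : m ∈ S) : tInd S m = 1 := by
  simp [tInd, h]

lemma tInd_notMem {S : Set ℕ} {m : ℕ} (h : m ∉ S) : tInd S m = 0 := by
  simp [tInd, h]

/-- `f = χ_C - χ_D`. -/
noncomputable def tF (C D : Set ℕ) (m : ℕ) : ℤ := tInd C m - tInd D m

/-- Partial sums of `tF`. -/
noncomputable def tS (C D : Set ℕ) (n : ℕ) : ℤ :=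
  ∑ a ∈ Finset.range (n + 1), tF C D a

/-- Sum of `tF` over the arithmetic progression `n, n-k, n-2k, ...`. -/
noncomputable def tT (k : ℕ) (C D : Set ℕ) (n : ℕ) : ℤ :=
  ∑ a ∈ Finset.range (n + 1), if k ∣ a then tF C D (n - a) else 0

/-- Half-point term. -/
noncomputable def tE (C D : Set ℕ) (n : ℕ) : ℤ :=
  if 2 ∣ n then tF C D (n / 2) else 0

variable {k : ℕ} {C D : Set ℕ}

lemma tF_zero (hI : C ∩ D = {n : ℕ | k ∣ n}) (m : ℕ) (h : k ∣ m) :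
    tF C D m = 0 := by
  have hm : m ∈ C ∩ D := by rw [hI]; exact h
  unfold tF
  rw [tInd_mem hm.1, tInd_mem hm.2]
  ring

lemma tF_pm (hU : C ∪ D = Set.univ) (hI : C ∩ D = {n : ℕ | k ∣ n}) (m : ℕ)
    (h : ¬ k ∣ m) : tF C D m = 1 ∨ tF C D m = -1 := by
  have hm : m ∈ C ∪ D := by rw [hU]; trivial
  have hnand : m ∉ C ∩ D := by rw [hI]; exact h
  unfold tF
  rcases hm with h1 | h1
  · left
    rw [tInd_mem h1, tInd_notMem (fun h2 => hnand ⟨h1, h2⟩)]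
    ring
  · right
    rw [tInd_notMem (fun h2 => hnand ⟨h2, h1⟩), tInd_mem h1]
    ring

lemma tInd_add (hU : C ∪ D = Set.univ) (hI : C ∩ D = {n : ℕ | k ∣ n}) (m : ℕ) :
    tInd C m + tInd D m = 1 + (if k ∣ m then (1 : ℤ) else 0) := by
  by_cases h : k ∣ m
  · have hm : m ∈ C ∩ D := by rw [hI]; exact h
    rw [if_pos h, tInd_mem hm.1, tInd_mem hm.2]
  · rw [if_neg h]
    have hm : m ∈ C ∪ D := by rw [hU]; trivial
    have hnand : m ∉ C ∩ D := by rw [hI]; exact h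
    rcases hm with h1 | h1
    · rw [tInd_mem h1, tInd_notMem (fun h2 => hnand ⟨h1, h2⟩)]
    · rw [tInd_notMem (fun h2 => hnand ⟨h2, h1⟩), tInd_mem h1]
      ring

open Classical in
lemma R_eq_sum (S : Set ℕ) (n : ℕ) :
    (R S n : ℤ) = ∑ a ∈ Finset.range (n + 1),
      if a ∈ S ∧ (n - a) ∈ S ∧ 2 * a < n then (1 : ℤ) else 0 := by
  classical
  have h1 : {p : ℕ × ℕ | p.1 ∈ S ∧ p.2 ∈ S ∧ p.1 < p.2 ∧ p.1 + p.2 = n} =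
      ↑(((Finset.range (n + 1)).filter
          (fun a => a ∈ S ∧ (n - a) ∈ S ∧ 2 * a < n)).image (fun a => (a, n - a))) := by
    ext ⟨p1, p2⟩
    simp only [Set.mem_setOf_eq, Finset.coe_image, Set.mem_image, Finset.mem_coe,
      Finset.mem_filter, Finset.mem_range, Prod.mk.injEq]
    constructor
    · rintro ⟨h1, h2, h3, h4⟩
      exact ⟨p1, ⟨by omega, h1, by rwa [show n - p1 = p2 by omega], by omega⟩, rfl, by omega⟩
    · rintro ⟨a, ⟨ha, h1, h2, h3⟩, rfl, rfl⟩
      exact ⟨h1, h2, by omega, by omega⟩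
  rw [R, h1, Set.ncard_coe_finset,
    Finset.card_image_of_injective _ (fun a b h => congrArg Prod.fst h),
    Finset.card_filter]
  push_cast
  rfl

open Classical in
lemma two_R (S : Set ℕ) (n : ℕ) :
    2 * (R S n : ℤ) = (∑ a ∈ Finset.range (n + 1), tInd S a * tInd S (n - a))
      - (if 2 ∣ n then tInd S (n / 2) else 0) := by
  classical
  have hsplit : ∀ a ∈ Finset.range (n + 1),
      tInd S a * tInd S (n - a) =
        (if a ∈ S ∧ (n - a) ∈ S ∧ 2 * a < n then (1 : ℤ) else 0)
        + (if a ∈ S ∧ (n - a) ∈ S ∧ n < 2 * a then (1 : ℤ) else 0)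
        + (if a ∈ S ∧ (n - a) ∈ S ∧ 2 * a = n then (1 : ℤ) else 0) := by
    intro a _
    by_cases h1 : a ∈ S
    · by_cases h2 : (n - a) ∈ S
      · rw [tInd_mem h1, tInd_mem h2]
        simp only [h1, h2, true_and]
        split_ifs <;> omega
      · rw [tInd_mem h1, tInd_notMem h2]
        simp [h2]
    · rw [tInd_notMem h1]
      simp [h1]
  have hrefl : (∑ a ∈ Finset.range (n + 1),
        if a ∈ S ∧ (n - a) ∈ S ∧ n < 2 * a then (1 : ℤ) else 0)
      = ∑ a ∈ Finset.range (n + 1),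
        if a ∈ S ∧ (n - a) ∈ S ∧ 2 * a < n then (1 : ℤ) else 0 := by
    rw [← Finset.sum_range_reflect
      (fun a => if a ∈ S ∧ (n - a) ∈ S ∧ n < 2 * a then (1 : ℤ) else 0) (n + 1)]
    apply Finset.sum_congr rfl
    intro a ha
    simp only [Finset.mem_range] at ha
    rw [show n + 1 - 1 - a = n - a by omega, show n - (n - a) = a by omega]
    apply if_congr _ rfl rfl
    constructor
    · rintro ⟨x, y, z⟩
      exact ⟨y, x, by omega⟩
    · rintro ⟨x, y, z⟩
      exact ⟨y, x, by omega⟩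
  have hdiag : (∑ a ∈ Finset.range (n + 1),
        if a ∈ S ∧ (n - a) ∈ S ∧ 2 * a = n then (1 : ℤ) else 0)
      = (if 2 ∣ n then tInd S (n / 2) else 0) := by
    by_cases h2 : 2 ∣ n
    · rw [if_pos h2]
      obtain ⟨v, rfl⟩ := h2
      rw [show 2 * v / 2 = v by omega]
      rw [Finset.sum_eq_single_of_mem v (Finset.mem_range.mpr (by omega))]
      · rw [show 2 * v - v = v by omega]
        by_cases hvS : v ∈ S
        · rw [if_pos ⟨hvS, hvS, rfl⟩, tInd_mem hvS]
        · rw [if_neg (by tauto), tInd_notMem hvS]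
      · intro b _ hbv
        exact if_neg (by rintro ⟨_, _, h⟩; omega)
    · rw [if_neg h2]
      apply Finset.sum_eq_zero
      intro a _
      exact if_neg (by rintro ⟨_, _, h⟩; exact h2 ⟨a, by omega⟩)
  have hprod : (∑ a ∈ Finset.range (n + 1), tInd S a * tInd S (n - a))
      = (∑ a ∈ Finset.range (n + 1),
          if a ∈ S ∧ (n - a) ∈ S ∧ 2 * a < n then (1 : ℤ) else 0)
        + (∑ a ∈ Finset.range (n + 1),
          if a ∈ S ∧ (n - a) ∈ S ∧ n < 2 * a then (1 : ℤ) else 0)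
        + (∑ a ∈ Finset.range (n + 1),
          if a ∈ S ∧ (n - a) ∈ S ∧ 2 * a = n then (1 : ℤ) else 0) := by
    rw [Finset.sum_congr rfl hsplit, Finset.sum_add_distrib, Finset.sum_add_distrib]
  have hR := R_eq_sum S n
  rw [hR, hprod, hrefl, hdiag]
  ring

lemma key_identity (hU : C ∪ D = Set.univ) (hI : C ∩ D = {n : ℕ | k ∣ n}) (n : ℕ) :
    2 * ((R C n : ℤ) - (R D n : ℤ)) = tS C D n + tT k C D n - tE C D n := by
  classical
  have hsum : ∀ a ∈ Finset.range (n + 1),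
      2 * (tInd C a * tInd C (n - a) - tInd D a * tInd D (n - a))
        = (tF C D (n - a) + (if k ∣ a then tF C D (n - a) else 0))
          + (tF C D a + (if k ∣ (n - a) then tF C D a else 0)) := by
    intro a _
    have e1 := tInd_add (k := k) hU hI a
    have e2 := tInd_add (k := k) hU hI (n - a)
    have expand : 2 * (tInd C a * tInd C (n - a) - tInd D a * tInd D (n - a))
        = (tInd C a + tInd D a) * (tInd C (n - a) - tInd D (n - a))
          + (tInd C a - tInd D a) * (tInd C (n - a) + tInd D (n - a)) := by ring
    rw [expand, e1, e2]
    unfold tF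
    split_ifs <;> ring
  have hsum2 : ∑ a ∈ Finset.range (n + 1),
        2 * (tInd C a * tInd C (n - a) - tInd D a * tInd D (n - a))
      = ((∑ a ∈ Finset.range (n + 1), tF C D (n - a)) + tT k C D n)
        + (tS C D n + (∑ a ∈ Finset.range (n + 1),
            if k ∣ (n - a) then tF C D a else 0)) := by
    rw [Finset.sum_congr rfl hsum, Finset.sum_add_distrib, Finset.sum_add_distrib,
      Finset.sum_add_distrib]
    unfold tT tS
    ring
  have hrefl1 : (∑ a ∈ Finset.range (n + 1), tF C D (n - a)) = tS C D n := by
    unfold tS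
    rw [← Finset.sum_range_reflect (fun a => tF C D a) (n + 1)]
    apply Finset.sum_congr rfl
    intro a ha
    simp only [Finset.mem_range] at ha
    rw [show n + 1 - 1 - a = n - a by omega]
  have hrefl2 : (∑ a ∈ Finset.range (n + 1), if k ∣ (n - a) then tF C D a else 0)
      = tT k C D n := by
    unfold tT
    rw [← Finset.sum_range_reflect (fun a => if k ∣ a then tF C D (n - a) else 0) (n + 1)]
    apply Finset.sum_congr rfl
    intro a ha
    simp only [Finset.mem_range] at ha
    rw [show n + 1 - 1 - a = n - a by omega, show n - (n - a) = a by omega]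
  have hcc : (∑ a ∈ Finset.range (n + 1), tInd C a * tInd C (n - a))
      - (∑ a ∈ Finset.range (n + 1), tInd D a * tInd D (n - a))
      = tS C D n + tT k C D n := by
    have h3 : (2 : ℤ) * ((∑ a ∈ Finset.range (n + 1), tInd C a * tInd C (n - a))
        - (∑ a ∈ Finset.range (n + 1), tInd D a * tInd D (n - a)))
        = 2 * (tS C D n + tT k C D n) := by
      rw [← Finset.sum_sub_distrib, Finset.mul_sum]
      rw [hsum2, hrefl1, hrefl2]
      ring
    linarith
  have hdiag : (if 2 ∣ n then tInd C (n / 2) else 0)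
      - (if 2 ∣ n then tInd D (n / 2) else 0) = tE C D n := by
    unfold tE tF
    split_ifs <;> ring
  have h2C := two_R C n
  have h2D := two_R D n
  linarith

lemma tT_rec (hk : 0 < k) (n : ℕ) :
    tT k C D (n + k) = tF C D (n + k) + tT k C D n := by
  unfold tT
  rw [show n + k + 1 = k + (n + 1) by omega, Finset.sum_range_add]
  congr 1
  · rw [Finset.sum_eq_single_of_mem 0 (Finset.mem_range.mpr hk)]
    · simp
    · intro b hb hb0
      exact if_neg (fun hd => hb0 (Nat.eq_zero_of_dvd_of_lt hd (Finset.mem_range.mp hb)))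
  · apply Finset.sum_congr rfl
    intro i hi
    simp only [Finset.mem_range] at hi
    exact if_congr (Nat.dvd_add_right (dvd_refl k))
      (by rw [show n + k - (k + i) = n - i by omega]) rfl

lemma tS_rec (n : ℕ) :
    tS C D (n + k) = tS C D n + ∑ i ∈ Finset.range k, tF C D (n + 1 + i) := by
  unfold tS
  rw [show n + k + 1 = (n + 1) + k by omega, Finset.sum_range_add]

end TangAux

theorem tang (k : ℕ) (hk : 2 ≤ k) (C D : Set ℕ)
    (hU : C ∪ D = Set.univ) (hI : C ∩ D = {n : ℕ | k ∣ n}) :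
    {n : ℕ | 0 < n ∧ R C n ≠ R D n}.Infinite := by
  classical
  by_contra hcon
  rw [Set.not_infinite] at hcon
  obtain ⟨N, hN⟩ := hcon.bddAbove
  have hstar : ∀ n, N < n → tS C D n + tT k C D n = tE C D n := by
    intro n hn
    have hR : R C n = R D n := by
      by_contra hne
      have hmem : n ∈ {n : ℕ | 0 < n ∧ R C n ≠ R D n} := ⟨by omega, hne⟩
      have := hN hmem
      omega
    have hkey := key_identity (k := k) hU hI n
    rw [hR, sub_self, mul_zero] at hkey
    linarith
  have hG : ∀ n, N < n →
      (∑ i ∈ Finset.range k, tF C D (n + 1 + i)) + tF C D (n + k)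
        = tE C D (n + k) - tE C D n := by
    intro n hn
    have h1 := hstar n hn
    have h2 := hstar (n + k) (by omega)
    have h3 := tS_rec (k := k) (C := C) (D := D) n
    have h4 := tT_rec (C := C) (D := D) (show 0 < k by omega) n
    linarith
  have hH : ∀ n, N < n →
      2 * tF C D (n + k + 1) - tF C D (n + 1) - tF C D (n + k)
        = tE C D (n + k + 1) - tE C D (n + 1) - tE C D (n + k) + tE C D n := by
    intro n hn
    have h1 := hG n hn
    have h2 := hG (n + 1) (by omega)
    have h3 : ∑ i ∈ Finset.range (k + 1), tF C D (n + 1 + i)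
        = (∑ i ∈ Finset.range k, tF C D (n + 1 + i)) + tF C D (n + 1 + k) :=
      Finset.sum_range_succ _ k
    have h4 : ∑ i ∈ Finset.range (k + 1), tF C D (n + 1 + i)
        = (∑ i ∈ Finset.range k, tF C D (n + 1 + (i + 1))) + tF C D (n + 1 + 0) :=
      Finset.sum_range_succ' _ k
    have h5 : ∑ i ∈ Finset.range k, tF C D (n + 1 + (i + 1))
        = ∑ i ∈ Finset.range k, tF C D (n + 1 + 1 + i) := by
      apply Finset.sum_congr rfl
      intro i _
      rw [show n + 1 + (i + 1) = n + 1 + 1 + i by omega]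
    rw [h5] at h4
    rw [show n + 1 + k = n + k + 1 by omega] at h3
    rw [show n + 1 + 0 = n + 1 by omega] at h4
    rw [show n + 1 + k = n + k + 1 by omega] at h2
    linarith
  -- Final contradiction at six points around 2k(N+1).
  have hkpos : 0 < k := by omega
  set t0 : ℕ := N + 1 with ht0
  have hKle : N + 1 ≤ k * t0 := by
    have := Nat.le_mul_of_pos_left t0 hkpos
    omega
  set K : ℕ := k * t0 with hKdef
  have hnd : ∀ (m r : ℕ), 0 < r → r < k → ¬ k ∣ (k * m + r) := by
    intro m r h1 h2 hd
    have hr : k ∣ r := (Nat.dvd_add_right ⟨m, rfl⟩).mp hd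
    exact absurd (Nat.le_of_dvd h1 hr) (by omega)
  have hzK : tF C D K = 0 := tF_zero hI K ⟨t0, hKdef⟩
  have hzKk : tF C D (K + k) = 0 := tF_zero hI _ ⟨t0 + 1, by rw [hKdef]; ring⟩
  have z1 : tF C D (2 * K + k) = 0 := tF_zero hI _ ⟨2 * t0 + 1, by rw [hKdef]; ring⟩
  have z2 : tF C D (2 * K + 2 * k) = 0 := tF_zero hI _ ⟨2 * t0 + 2, by rw [hKdef]; ring⟩
  have p1 : tF C D (2 * K + 1) = 1 ∨ tF C D (2 * K + 1) = -1 := by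
    apply tF_pm hU hI
    have := hnd (2 * t0) 1 (by omega) (by omega)
    rwa [show k * (2 * t0) + 1 = 2 * K + 1 by rw [hKdef]; ring] at this
  have p2 : tF C D (2 * K + k + 1) = 1 ∨ tF C D (2 * K + k + 1) = -1 := by
    apply tF_pm hU hI
    have := hnd (2 * t0 + 1) 1 (by omega) (by omega)
    rwa [show k * (2 * t0 + 1) + 1 = 2 * K + k + 1 by rw [hKdef]; ring] at this
  have p3 : tF C D (2 * K + 2 * k + 1) = 1 ∨ tF C D (2 * K + 2 * k + 1) = -1 := by
    apply tF_pm hU hI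
    have := hnd (2 * t0 + 2) 1 (by omega) (by omega)
    rwa [show k * (2 * t0 + 2) + 1 = 2 * K + 2 * k + 1 by rw [hKdef]; ring] at this
  have hI1 := hH (2 * K) (by omega)
  have hI2 := hH (2 * K + k) (by omega)
  rw [show 2 * K + k + k + 1 = 2 * K + 2 * k + 1 by ring,
    show 2 * K + k + k = 2 * K + 2 * k by ring] at hI2
  have e0 : tE C D (2 * K) = 0 := by
    unfold tE
    rw [if_pos ⟨K, by ring⟩, show 2 * K / 2 = K by omega]
    exact hzK
  have e1 : tE C D (2 * K + 1) = 0 := by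
    unfold tE
    rw [if_neg (by omega)]
  have e4 : tE C D (2 * K + 2 * k) = 0 := by
    unfold tE
    rw [if_pos ⟨K + k, by ring⟩, show (2 * K + 2 * k) / 2 = K + k by omega]
    exact hzKk
  have e5 : tE C D (2 * K + 2 * k + 1) = 0 := by
    unfold tE
    rw [if_neg (by omega)]
  rcases Nat.even_or_odd k with hke | hko
  · -- k even
    obtain ⟨j, hj⟩ := hke
    have hj1 : 1 ≤ j := by omega
    have e2 : tE C D (2 * K + k) = tF C D (K + j) := by
      unfold tE
      rw [if_pos ⟨K + j, by omega⟩, show (2 * K + k) / 2 = K + j by omega]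
    have e3 : tE C D (2 * K + k + 1) = 0 := by
      unfold tE
      rw [if_neg (by omega)]
    have p4 : tF C D (K + j) = 1 ∨ tF C D (K + j) = -1 := by
      apply tF_pm hU hI
      have := hnd t0 j (by omega) (by omega)
      rwa [show k * t0 + j = K + j by rw [hKdef]] at this
    rw [e0, e1, e2, e3, z1] at hI1
    rw [e2, e3, e4, e5, z2] at hI2
    rcases p1 with h1 | h1 <;> rcases p2 with h2 | h2 <;> rcases p3 with h3 | h3 <;>
      rcases p4 with h4 | h4 <;> omega
  · -- k odd
    obtain ⟨j, hj⟩ := hko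
    have hj1 : 1 ≤ j := by omega
    have e2 : tE C D (2 * K + k) = 0 := by
      unfold tE
      rw [if_neg (by omega)]
    have e3 : tE C D (2 * K + k + 1) = tF C D (K + j + 1) := by
      unfold tE
      rw [if_pos ⟨K + j + 1, by omega⟩, show (2 * K + k + 1) / 2 = K + j + 1 by omega]
    have p4 : tF C D (K + j + 1) = 1 ∨ tF C D (K + j + 1) = -1 := by
      apply tF_pm hU hI
      have := hnd t0 (j + 1) (by omega) (by omega)
      rwa [show k * t0 + (j + 1) = K + j + 1 by rw [hKdef]; ring] at this
    rw [e0, e1, e2, e3, z1] at hI1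
    rw [e2, e3, e4, e5, z2] at hI2
    rcases p1 with h1 | h1 <;> rcases p2 with h2 | h2 <;> rcases p3 with h3 | h3 <;>
      rcases p4 with h4 | h4 <;> omega
end

section
/- For every positive integer l there exist sets C and D of nonnegative integers such that C ∪ D = ℕ, C ∩ D = (2^{2l} − 1) + (2^{2l+1} − 1)ℕ, and R_C(n) = R_D(n) for every positive integer n. -/
/-!
Write `r = 2^{2l} - 1`, `m = 2r + 1`, let `T(x) = ∑ (1_A - 1_B)(n) xⁿ = ∏_{i ≥ 0} (1 - x^{2^i})` be
the Thue–Morse series, `Q(x) = ∏_{i < 2l} (1 - x^{2^i})` and `P(x) = (1 - x^r) Q(x)`. The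
polynomial `P` has degree `< m` and coefficients `±1` except for a `0` at `x^r`, so
`G(x) = P(x) T(x^m)` has coefficients in `{0, ±1}`, vanishing exactly on `r + mℕ`. Take
`C = {n | gₙ ≥ 0}` and `D = {n | gₙ ≤ 0}`: then `C(x) - D(x) = G(x)` and
`C(x) + D(x) = 1/(1 - x) + x^r/(1 - x^m)`. Since `C(x)² = 2 ∑ R_C(n) xⁿ + C(x²)`, the equality
`R_C = R_D` amounts to `G(x) (C(x) + D(x)) = G(x²)`. By `T(x) = (1 - x) T(x²)` this reduces to the
polynomial identity `(1 - x) P(x²) = P(x) (1 - x^m + x^r (1 - x))`, which follows from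
`(1 - x) Q(x²) = (1 - x^{r+1}) Q(x)` and
`(1 - x^r)(1 + x^r)(1 - x^{r+1}) = (1 - x^{2r})(1 - x^{r+1})`.
-/

open PowerSeries

theorem PowerSeries.coeff_one_sub_X_pow_mul {α : Type*} [CommRing α] (N s : ℕ) (f : α⟦X⟧) :
    coeff s ((1 - X ^ N) * f) = coeff s f - if N ≤ s then coeff (s - N) f else 0 := by
  rw [sub_mul, one_mul, map_sub, coeff_X_pow_mul']

theorem PowerSeries.coeff_mul_expand {α : Type*} [CommRing α] {m : ℕ} (hm : m ≠ 0) {P : α⟦X⟧}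
    (hP : ∀ i, m ≤ i → coeff i P = 0) (F : α⟦X⟧) (n : ℕ) :
    coeff n (P * expand m hm F) = coeff (n % m) P * coeff (n / m) F := by
  rw [coeff_mul, Finset.sum_eq_single (n % m, m * (n / m))]
  · rw [coeff_expand_mul]
  · rintro ⟨i, j⟩ hij hne
    rw [Finset.HasAntidiagonal.mem_antidiagonal] at hij
    by_cases hi : m ≤ i
    · rw [hP i hi, zero_mul]
    rw [coeff_expand, if_neg, mul_zero]
    rintro ⟨q, rfl⟩
    obtain ⟨hq, hi⟩ := (Nat.div_mod_unique (Nat.pos_of_ne_zero hm)).mpr ⟨hij, not_le.mp hi⟩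
    rw [hq, hi] at hne
    exact hne rfl
  · intro h
    exact absurd (Finset.HasAntidiagonal.mem_antidiagonal.mpr (Nat.mod_add_div n m)) h

section Representations

open Finset

noncomputable def indicatorSeries (S : Set ℕ) : ℤ⟦X⟧ := mk (S.indicator 1)

open Classical in
theorem R_eq_card_filter_antidiagonal (S : Set ℕ) (n : ℕ) :
    R S n = #{p ∈ antidiagonal n | p.1 ∈ S ∧ p.2 ∈ S ∧ p.1 < p.2} := by
  rw [R, ← Set.ncard_coe_finset]
  congr 1
  ext p
  simp only [Set.mem_ofPred_eq, coe_filter, HasAntidiagonal.mem_antidiagonal]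
  tauto

theorem sum_antidiagonal_ite_fst_eq_snd (n : ℕ) (f : ℕ → ℤ) :
    ∑ p ∈ antidiagonal n, (if p.1 = p.2 then f p.1 else 0) = if 2 ∣ n then f (n / 2) else 0 := by
  split_ifs with h
  · rw [sum_eq_single (n / 2, n / 2)]
    · simp
    · rintro ⟨i, j⟩ hij hne
      simp only [HasAntidiagonal.mem_antidiagonal] at hij
      refine if_neg fun hij' => hne ?_
      simp only at hij'
      ext <;> simp <;> omega
    · simp only [HasAntidiagonal.mem_antidiagonal, ite_eq_right_iff]
      omega
  · refine sum_eq_zero fun p hp => if_neg ?_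
    rw [HasAntidiagonal.mem_antidiagonal] at hp
    omega

theorem indicatorSeries_sq (S : Set ℕ) :
    indicatorSeries S ^ 2
      = mk (fun n => 2 * (R S n : ℤ)) + expand 2 two_ne_zero (indicatorSeries S) := by
  classical
  ext n
  set f : ℕ → ℤ := S.indicator 1
  have hsplit : ∀ p : ℕ × ℕ, f p.1 * f p.2 = (if p.1 < p.2 then f p.1 * f p.2 else 0)
      + (if p.2 < p.1 then f p.1 * f p.2 else 0) + (if p.1 = p.2 then f p.1 else 0) := by
    rintro ⟨i, j⟩
    rcases lt_trichotomy i j with h | rfl | h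
    · simp [h, h.ne, h.not_gt]
    · simp [f, Set.indicator_apply]
    · simp [h, h.ne', h.not_gt]
  have hR : ∑ p ∈ antidiagonal n, (if p.1 < p.2 then f p.1 * f p.2 else 0) = R S n := by
    rw [R_eq_card_filter_antidiagonal, natCast_card_filter]
    refine sum_congr rfl fun p _ => ?_
    by_cases h1 : p.1 ∈ S <;> by_cases h2 : p.2 ∈ S <;> simp [f, h1, h2]
  simp only [pow_two, coeff_mul, indicatorSeries, coeff_mk]
  have hswap : ∑ p ∈ antidiagonal n, (if p.2 < p.1 then f p.1 * f p.2 else 0)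
      = ∑ p ∈ antidiagonal n, (if p.1 < p.2 then f p.1 * f p.2 else 0) := by
    rw [← Nat.sum_antidiagonal_swap]
    simp only [Prod.fst_swap, Prod.snd_swap, mul_comm]
  rw [sum_congr rfl fun p _ => hsplit p, sum_add_distrib, sum_add_distrib, hswap, hR,
    sum_antidiagonal_ite_fst_eq_snd, map_add, coeff_expand]
  simp [two_mul, f]

end Representations

theorem R_eq_of_mul_eq_expand {C D : Set ℕ}
    (h : (indicatorSeries C - indicatorSeries D) * (indicatorSeries C + indicatorSeries D)
      = expand 2 two_ne_zero (indicatorSeries C - indicatorSeries D)) (n : ℕ) :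
    R C n = R D n := by
  rw [map_sub] at h
  have h2 : mk (fun n => 2 * (R C n : ℤ)) = mk fun n => 2 * (R D n : ℤ) := by
    linear_combination h - indicatorSeries_sq C + indicatorSeries_sq D
  have := congrArg (coeff n) h2
  simp only [coeff_mk] at this
  omega

theorem exists_R_eq_of_mul_eq_expand (G : ℤ⟦X⟧)
    (hG : ∀ n, coeff n G = -1 ∨ coeff n G = 0 ∨ coeff n G = 1)
    (h : G * (mk 1 + indicatorSeries {n | coeff n G = 0}) = expand 2 two_ne_zero G) :
    ∃ C D : Set ℕ, C ∪ D = Set.univ ∧ C ∩ D = {n | coeff n G = 0} ∧ ∀ n, R C n = R D n := by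
  refine ⟨{n | 0 ≤ coeff n G}, {n | coeff n G ≤ 0}, ?_, ?_, R_eq_of_mul_eq_expand ?_⟩
  · exact Set.eq_univ_of_forall fun n => le_total 0 (coeff n G)
  · ext n
    exact ⟨fun h => le_antisymm h.2 h.1, fun h => ⟨h.ge, h.le⟩⟩
  · have hsub : indicatorSeries {n | 0 ≤ coeff n G} - indicatorSeries {n | coeff n G ≤ 0} = G := by
      ext n
      rcases hG n with h | h | h <;> simp [indicatorSeries, h]
    have hadd : indicatorSeries {n | 0 ≤ coeff n G} + indicatorSeries {n | coeff n G ≤ 0}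
        = mk 1 + indicatorSeries {n | coeff n G = 0} := by
      ext n
      rcases hG n with h | h | h <;> simp [indicatorSeries, h]
    rw [hsub, hadd, h]

theorem indicatorSeries_progression (r m : ℕ) (hm : m ≠ 0) :
    indicatorSeries {n | ∃ k, n = r + k * m} = X ^ r * expand m hm (mk 1) := by
  classical
  ext n
  rw [coeff_X_pow_mul', indicatorSeries, coeff_mk, Set.indicator_apply]
  by_cases hr : r ≤ n
  · rw [if_pos hr, coeff_expand]
    simp only [Set.mem_ofPred_eq, coeff_mk, Pi.one_apply]
    congr 1
    refine propext ⟨fun ⟨k, hk⟩ => ⟨k, by rw [hk]; simp [mul_comm]⟩, fun ⟨k, hk⟩ => ⟨k, ?_⟩⟩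
    rw [mul_comm]
    omega
  · rw [if_neg hr, if_neg]
    rintro ⟨k, rfl⟩
    omega

noncomputable def thueMorse : ℤ⟦X⟧ := indicatorSeries A - indicatorSeries B

theorem coeff_thueMorse (n : ℕ) : coeff n thueMorse = (-1) ^ (Nat.digits 2 n).sum := by
  rcases Nat.even_or_odd (Nat.digits 2 n).sum with h | h
  · simp [thueMorse, indicatorSeries, A, B, h, h.neg_one_pow]
  · simp [thueMorse, indicatorSeries, A, B, Nat.not_even_iff_odd.mpr h, h.neg_one_pow]

theorem coeff_thueMorse_two_mul (k : ℕ) : coeff (2 * k) thueMorse = coeff k thueMorse := by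
  rcases k.eq_zero_or_pos with rfl | hk
  · rfl
  · simp [coeff_thueMorse, Nat.digits_def' one_lt_two (by omega : 0 < 2 * k)]

theorem coeff_thueMorse_two_mul_add_one (k : ℕ) :
    coeff (2 * k + 1) thueMorse = -coeff k thueMorse := by
  have : (2 * k + 1) / 2 = k := by omega
  simp [coeff_thueMorse, this, pow_add]

theorem isUnit_coeff_thueMorse (n : ℕ) : IsUnit (coeff n thueMorse) := by
  rw [coeff_thueMorse]
  exact isUnit_neg_one.pow _

theorem one_sub_X_mul_expand_thueMorse :
    (1 - X) * expand 2 two_ne_zero thueMorse = thueMorse := by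
  ext n
  rw [← pow_one (X : ℤ⟦X⟧), coeff_one_sub_X_pow_mul, coeff_expand, coeff_expand]
  obtain ⟨k, rfl | rfl⟩ := n.even_or_odd'
  · rcases k.eq_zero_or_pos with rfl | hk
    · simp
    · rw [if_pos (dvd_mul_right 2 k), if_pos (by omega), if_neg (by omega),
        Nat.mul_div_cancel_left k two_pos, coeff_thueMorse_two_mul, sub_zero]
  · rw [if_neg (by omega), if_pos (by omega), Nat.add_sub_cancel, if_pos (dvd_mul_right 2 k),
      Nat.mul_div_cancel_left k two_pos, coeff_thueMorse_two_mul_add_one, zero_sub]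

noncomputable def thueMorsePrefix (k : ℕ) : ℤ⟦X⟧ := ∏ i ∈ Finset.range k, (1 - X ^ 2 ^ i)

theorem thueMorsePrefix_succ (k : ℕ) :
    thueMorsePrefix (k + 1) = (1 - X ^ 2 ^ k) * thueMorsePrefix k := by
  rw [thueMorsePrefix, Finset.prod_range_succ, mul_comm, thueMorsePrefix]

theorem one_sub_X_mul_expand_thueMorsePrefix (k : ℕ) :
    (1 - X) * expand 2 two_ne_zero (thueMorsePrefix k) = (1 - X ^ 2 ^ k) * thueMorsePrefix k := by
  rw [← thueMorsePrefix_succ, thueMorsePrefix, thueMorsePrefix, Finset.prod_range_succ', map_prod]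
  simp [pow_succ, pow_mul, mul_comm]

theorem coeff_thueMorsePrefix_of_le {k s : ℕ} (h : 2 ^ k ≤ s) :
    coeff s (thueMorsePrefix k) = 0 := by
  induction k generalizing s with
  | zero => simp [thueMorsePrefix, coeff_one]; omega
  | succ k ih =>
    rw [thueMorsePrefix_succ, coeff_one_sub_X_pow_mul, if_pos (by omega), ih (by omega),
      ih (by omega), sub_zero]

theorem isUnit_coeff_thueMorsePrefix {k s : ℕ} (h : s < 2 ^ k) :
    IsUnit (coeff s (thueMorsePrefix k)) := by
  induction k generalizing s with
  | zero => simp_all [thueMorsePrefix, coeff_one]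
  | succ k ih =>
    rw [thueMorsePrefix_succ, coeff_one_sub_X_pow_mul]
    by_cases hs : 2 ^ k ≤ s
    · rw [if_pos hs, coeff_thueMorsePrefix_of_le hs, zero_sub, IsUnit.neg_iff]
      exact ih (by omega)
    · rw [if_neg hs, sub_zero]
      exact ih (by omega)

theorem coeff_zero_thueMorsePrefix (k : ℕ) : coeff 0 (thueMorsePrefix k) = 1 := by
  simp [thueMorsePrefix, map_prod]

theorem coeff_thueMorsePrefix_two_pow_sub_one (k : ℕ) :
    coeff (2 ^ k - 1) (thueMorsePrefix k) = (-1) ^ k := by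
  induction k with
  | zero => simp [thueMorsePrefix]
  | succ k ih =>
    rw [thueMorsePrefix_succ, coeff_one_sub_X_pow_mul, if_pos (by omega),
      coeff_thueMorsePrefix_of_le (by omega), show 2 ^ (k + 1) - 1 - 2 ^ k = 2 ^ k - 1 by omega,
      ih, pow_succ]
    ring

theorem two_pow_succ_sub_one (k : ℕ) : 2 ^ (k + 1) - 1 = 2 * (2 ^ k - 1) + 1 := by
  have := Nat.one_le_two_pow (n := k)
  rw [pow_succ]
  omega

theorem two_pow_succ_sub_one_ne_zero (k : ℕ) : 2 ^ (k + 1) - 1 ≠ 0 := by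
  rw [two_pow_succ_sub_one]
  omega

noncomputable def chenLevPoly (k : ℕ) : ℤ⟦X⟧ := (1 - X ^ (2 ^ k - 1)) * thueMorsePrefix k

noncomputable def chenLevSeries (k : ℕ) : ℤ⟦X⟧ :=
  chenLevPoly k * expand (2 ^ (k + 1) - 1) (two_pow_succ_sub_one_ne_zero k) thueMorse

theorem coeff_chenLevPoly_of_le {k s : ℕ} (h : 2 ^ (k + 1) - 1 ≤ s) :
    coeff s (chenLevPoly k) = 0 := by
  rw [two_pow_succ_sub_one] at h
  have := Nat.one_le_two_pow (n := k)
  rw [chenLevPoly, coeff_one_sub_X_pow_mul, if_pos (by omega),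
    coeff_thueMorsePrefix_of_le (by omega), coeff_thueMorsePrefix_of_le (by omega), sub_zero]

theorem coeff_chenLevPoly_self {k : ℕ} (hk : Even k) : coeff (2 ^ k - 1) (chenLevPoly k) = 0 := by
  rw [chenLevPoly, coeff_one_sub_X_pow_mul, if_pos le_rfl, Nat.sub_self,
    coeff_thueMorsePrefix_two_pow_sub_one, coeff_zero_thueMorsePrefix, hk.neg_one_pow, sub_self]

theorem isUnit_coeff_chenLevPoly {k s : ℕ} (h : s < 2 ^ (k + 1) - 1) (hs : s ≠ 2 ^ k - 1) :
    IsUnit (coeff s (chenLevPoly k)) := by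
  rw [two_pow_succ_sub_one] at h
  have := Nat.one_le_two_pow (n := k)
  rw [chenLevPoly, coeff_one_sub_X_pow_mul]
  by_cases hr : 2 ^ k - 1 ≤ s
  · rw [if_pos hr, coeff_thueMorsePrefix_of_le (by omega), zero_sub, IsUnit.neg_iff]
    exact isUnit_coeff_thueMorsePrefix (by omega)
  · rw [if_neg hr, sub_zero]
    exact isUnit_coeff_thueMorsePrefix (by omega)

theorem one_sub_X_mul_expand_chenLevPoly (k : ℕ) :
    (1 - X) * expand 2 two_ne_zero (chenLevPoly k)
      = chenLevPoly k * (1 - X ^ (2 ^ (k + 1) - 1) + X ^ (2 ^ k - 1) * (1 - X)) := by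
  have hQ := one_sub_X_mul_expand_thueMorsePrefix k
  have hk : 2 ^ k = 2 ^ k - 1 + 1 := (Nat.sub_add_cancel Nat.one_le_two_pow).symm
  rw [hk, pow_succ] at hQ
  rw [chenLevPoly, map_mul, map_sub, map_one, map_pow, expand_X, ← pow_mul, two_pow_succ_sub_one,
    pow_succ, pow_mul']
  linear_combination (1 - (X : ℤ⟦X⟧) ^ (2 ^ k - 1) * X ^ (2 ^ k - 1)) * hQ

theorem chenLevSeries_mul (k : ℕ) :
    chenLevSeries k * (mk 1 + X ^ (2 ^ k - 1)
      * expand (2 ^ (k + 1) - 1) (two_pow_succ_sub_one_ne_zero k) (mk 1))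
      = expand 2 two_ne_zero (chenLevSeries k) := by
  have hP := one_sub_X_mul_expand_chenLevPoly k
  set m := 2 ^ (k + 1) - 1
  have hm := two_pow_succ_sub_one_ne_zero k
  have hS : (mk 1 : ℤ⟦X⟧) * (1 - X) = 1 := mk_one_mul_one_sub_eq_one ℤ
  have hSm : expand m hm (mk 1 : ℤ⟦X⟧) * (1 - X ^ m) = 1 := by
    simpa using congrArg (expand m hm) hS
  have hT : expand m hm thueMorse
      = (1 - X ^ m) * expand (2 * m) (mul_ne_zero two_ne_zero hm) thueMorse := by
    conv_lhs => rw [← one_sub_X_mul_expand_thueMorse]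
    rw [map_mul, map_sub, map_one, expand_X, ← expand_mul]
    simp only [mul_comm m 2]
  have hT2 : expand 2 two_ne_zero (expand m hm thueMorse)
      = expand (2 * m) (mul_ne_zero two_ne_zero hm) thueMorse :=
    (expand_mul _ _ _ _ _).symm
  rw [chenLevSeries, map_mul, hT2, hT]
  set P := chenLevPoly k
  set T := expand (2 * m) (mul_ne_zero two_ne_zero hm) thueMorse
  linear_combination T * (-mk 1 * hP + (expand 2 two_ne_zero P - P * X ^ (2 ^ k - 1)) * hS
    + P * X ^ (2 ^ k - 1) * hSm)

theorem coeff_chenLevSeries (k n : ℕ) :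
    coeff n (chenLevSeries k) = coeff (n % (2 ^ (k + 1) - 1)) (chenLevPoly k)
      * coeff (n / (2 ^ (k + 1) - 1)) thueMorse :=
  coeff_mul_expand _ (fun _ => coeff_chenLevPoly_of_le) _ n

theorem coeff_chenLevSeries_eq_zero_iff {k : ℕ} (hk : Even k) (n : ℕ) :
    coeff n (chenLevSeries k) = 0 ↔ ∃ q, n = 2 ^ k - 1 + q * (2 ^ (k + 1) - 1) := by
  have hm := Nat.pos_of_ne_zero (two_pow_succ_sub_one_ne_zero k)
  have hmr : 2 ^ k - 1 < 2 ^ (k + 1) - 1 := by rw [two_pow_succ_sub_one]; omega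
  rw [coeff_chenLevSeries, mul_eq_zero, or_iff_left (isUnit_coeff_thueMorse _).ne_zero]
  constructor
  · intro h
    by_cases hs : n % (2 ^ (k + 1) - 1) = 2 ^ k - 1
    · exact ⟨n / (2 ^ (k + 1) - 1), by rw [← hs, mul_comm]; exact (Nat.mod_add_div n _).symm⟩
    · exact absurd h (isUnit_coeff_chenLevPoly (Nat.mod_lt n hm) hs).ne_zero
  · rintro ⟨q, rfl⟩
    rw [Nat.add_mul_mod_self_right, Nat.mod_eq_of_lt hmr, coeff_chenLevPoly_self hk]

theorem coeff_chenLevSeries_eq_neg_one_or_zero_or_one {k : ℕ} (hk : Even k) (n : ℕ) :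
    coeff n (chenLevSeries k) = -1 ∨ coeff n (chenLevSeries k) = 0
      ∨ coeff n (chenLevSeries k) = 1 := by
  have hm := Nat.pos_of_ne_zero (two_pow_succ_sub_one_ne_zero k)
  rw [coeff_chenLevSeries]
  by_cases hs : n % (2 ^ (k + 1) - 1) = 2 ^ k - 1
  · rw [hs, coeff_chenLevPoly_self hk, zero_mul]
    exact Or.inr (Or.inl rfl)
  · have h := (isUnit_coeff_chenLevPoly (Nat.mod_lt n hm) hs).mul
      (isUnit_coeff_thueMorse (n / (2 ^ (k + 1) - 1)))
    rcases Int.isUnit_iff.mp h with h | h <;> simp [h]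

theorem chen_lev_general (l : ℕ) :
    ∃ C D : Set ℕ, C ∪ D = Set.univ ∧
      C ∩ D = {n : ℕ | ∃ k : ℕ, n = 2 ^ (2 * l) - 1 + k * (2 ^ (2 * l + 1) - 1)} ∧
      ∀ n : ℕ, 0 < n → R C n = R D n := by
  have hzero : {n | coeff n (chenLevSeries (2 * l)) = 0}
      = {n : ℕ | ∃ k : ℕ, n = 2 ^ (2 * l) - 1 + k * (2 ^ (2 * l + 1) - 1)} :=
    Set.ext (coeff_chenLevSeries_eq_zero_iff (even_two_mul l))
  obtain ⟨C, D, hunion, hinter, hR⟩ := exists_R_eq_of_mul_eq_expand (chenLevSeries (2 * l))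
    (coeff_chenLevSeries_eq_neg_one_or_zero_or_one (even_two_mul l)) (by
      rw [hzero, indicatorSeries_progression _ _ (two_pow_succ_sub_one_ne_zero _),
        chenLevSeries_mul])
  exact ⟨C, D, hunion, hinter.trans hzero, fun n _ => hR n⟩

theorem chen_lev (l : ℕ) (hl : 0 < l) :
    ∃ C D : Set ℕ, C ∪ D = Set.univ ∧
      C ∩ D = {n : ℕ | ∃ k : ℕ, n = 2 ^ (2 * l) - 1 + k * (2 ^ (2 * l + 1) - 1)} ∧
      ∀ n : ℕ, 0 < n → R C n = R D n :=
  chen_lev_general l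
end

section
/- Let m ≥ 2 and 0 ≤ r ≤ m be integers. If there exist sets C₀ and D₀ of nonnegative integers such that C₀ ∪ D₀ = [0, m], C₀ ∩ D₀ = {r}, and R_{C₀}(n) = R_{D₀}(n) for every positive integer n, then there exist sets C and D of nonnegative integers such that C ∪ D = ℕ, C ∩ D = r + (m + 1)ℕ, and R_C(n) = R_D(n) for every positive integer n. -/
open Finset

attribute [local instance] Classical.propDecidable

noncomputable def sg (k : ℕ) : ℤ := if k ∈ A then 1 else -1

lemma A_two_mul (j : ℕ) : 2 * j ∈ A ↔ j ∈ A := by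
  rcases Nat.eq_zero_or_pos j with h | h
  · simp [h]
  · have hd : Nat.digits 2 (2 * j) = 0 :: Nat.digits 2 j := by
      rw [Nat.digits_def' (by norm_num : 1 < 2) (by omega)]
      simp [Nat.mul_div_cancel_left _ (by norm_num : 0 < 2)]
    simp [A, hd]

lemma A_two_mul_add_one (j : ℕ) : 2 * j + 1 ∈ A ↔ j ∉ A := by
  have hd : Nat.digits 2 (2 * j + 1) = 1 :: Nat.digits 2 j := by
    rw [Nat.digits_def' (by norm_num : 1 < 2) (by omega)]
    have h1 : (2 * j + 1) % 2 = 1 := by omega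
    have h2 : (2 * j + 1) / 2 = j := by omega
    rw [h1, h2]
  rw [A, Set.mem_setOf_eq, Set.mem_setOf_eq, hd]
  rw [List.sum_cons, Nat.add_comm, Nat.even_add_one]

lemma sg_two_mul (j : ℕ) : sg (2 * j) = sg j := by
  unfold sg
  by_cases h : j ∈ A
  · rw [if_pos h, if_pos ((A_two_mul j).mpr h)]
  · rw [if_neg h, if_neg fun hc => h ((A_two_mul j).mp hc)]

lemma sg_two_mul_add_one (j : ℕ) : sg (2 * j + 1) = - sg j := by
  unfold sg
  by_cases h : j ∈ A
  · rw [if_pos h, if_neg (fun hc => ((A_two_mul_add_one j).mp hc) h)]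
  · rw [if_neg h, if_pos ((A_two_mul_add_one j).mpr h)]; ring

lemma sg_zero : sg 0 = 1 := by simp [sg, A]

lemma ps (K : ℕ) : ∑ k ∈ range (K + 1), sg k = if K % 2 = 0 then sg (K / 2) else 0 := by
  induction K with
  | zero => simp [sg_zero]
  | succ K ih =>
    rw [Finset.sum_range_succ, ih]
    rcases Nat.even_or_odd (K + 1) with ⟨j, hj⟩ | ⟨j, hj⟩
    · have hK : K = 2 * (j - 1) + 1 := by omega
      have hj2 : K + 1 = 2 * j := by omega
      rw [hj2, sg_two_mul]
      have h1 : K % 2 = 1 := by omega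
      have h2 : (2 * j) % 2 = 0 := by omega
      have h3 : (2 * j) / 2 = j := by omega
      simp [h1, h2, h3]
    · have hj2 : K + 1 = 2 * j + 1 := by omega
      rw [hj2, sg_two_mul_add_one]
      have h1 : K % 2 = 0 := by omega
      have h2 : K / 2 = j := by omega
      have h3 : (2 * j + 1) % 2 = 1 := by omega
      simp [h1, h2, h3]

lemma tm_s7 (K : ℕ) :
    ∑ k ∈ (range (K + 1)).filter (fun k => 2 * k < K ∧ ((k ∈ A) ↔ (K - k) ∈ A)), sg k = 0 := by
  set F := (range (K + 1)).filter (fun k => 2 * k < K) with hF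
  have hff : (range (K + 1)).filter (fun k => 2 * k < K ∧ ((k ∈ A) ↔ (K - k) ∈ A))
      = F.filter (fun k => (k ∈ A) ↔ (K - k) ∈ A) := by
    rw [hF, Finset.filter_filter]
  have key : ∑ k ∈ F, (sg k + sg (K - k))
      = 2 * ∑ k ∈ (range (K + 1)).filter (fun k => 2 * k < K ∧ ((k ∈ A) ↔ (K - k) ∈ A)), sg k := by
    rw [hff, ← Finset.sum_filter_add_sum_filter_not F (fun k => (k ∈ A) ↔ (K - k) ∈ A)
      (fun k => sg k + sg (K - k))]
    have h1 : ∑ k ∈ F.filter (fun k => (k ∈ A) ↔ (K - k) ∈ A), (sg k + sg (K - k))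
        = ∑ k ∈ F.filter (fun k => (k ∈ A) ↔ (K - k) ∈ A), 2 * sg k := by
      apply Finset.sum_congr rfl
      intro k hk
      have hiff : (k ∈ A) ↔ (K - k) ∈ A := (Finset.mem_filter.mp hk).2
      by_cases h : k ∈ A
      · rw [sg, sg, if_pos h, if_pos (hiff.mp h)]; ring
      · rw [sg, sg, if_neg h, if_neg (fun hc => h (hiff.mpr hc))]; ring
    have h2 : ∑ k ∈ F.filter (fun k => ¬((k ∈ A) ↔ (K - k) ∈ A)), (sg k + sg (K - k)) = 0 := by
      apply Finset.sum_eq_zero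
      intro k hk
      have hiff := (Finset.mem_filter.mp hk).2
      by_cases h : k ∈ A
      · have h' : (K - k) ∉ A := fun hc => hiff ⟨fun _ => hc, fun _ => h⟩
        rw [sg, sg, if_pos h, if_neg h']; ring
      · have h' : (K - k) ∈ A := by
          by_contra h'
          exact hiff ⟨fun hc => absurd hc h, fun hc => absurd hc h'⟩
        rw [sg, sg, if_neg h, if_pos h']; ring
    rw [h1, h2, Finset.mul_sum]
    ring
  have hre : ∑ k ∈ F, sg (K - k) = ∑ l ∈ (range (K + 1)).filter (fun l => K < 2 * l), sg l := by
    apply Finset.sum_nbij' (fun k => K - k) (fun l => K - l)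
    · intro a ha
      simp only [hF, Finset.mem_filter, Finset.mem_range] at ha ⊢
      omega
    · intro a ha
      simp only [hF, Finset.mem_filter, Finset.mem_range] at ha ⊢
      omega
    · intro a ha
      simp only [hF, Finset.mem_filter, Finset.mem_range] at ha
      omega
    · intro a ha
      simp only [Finset.mem_filter, Finset.mem_range] at ha
      omega
    · intro a _; rfl
  have hmid : ∑ k ∈ (range (K + 1)).filter (fun k => 2 * k = K), sg k
      = if K % 2 = 0 then sg (K / 2) else 0 := by
    by_cases hK : K % 2 = 0
    · have : (range (K + 1)).filter (fun k => 2 * k = K) = {K / 2} := by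
        ext k; simp only [Finset.mem_filter, Finset.mem_range, Finset.mem_singleton]; omega
      rw [this, if_pos hK, Finset.sum_singleton]
    · have : (range (K + 1)).filter (fun k => 2 * k = K) = ∅ := by
        ext k; simp only [Finset.mem_filter, Finset.mem_range, Finset.notMem_empty, iff_false]
        omega
      rw [this, if_neg hK, Finset.sum_empty]
  have hpart : ∑ k ∈ F, sg k + ∑ k ∈ (range (K + 1)).filter (fun k => K < 2 * k), sg k
      + ∑ k ∈ (range (K + 1)).filter (fun k => 2 * k = K), sg k
      = ∑ k ∈ range (K + 1), sg k := by
    rw [← Finset.sum_filter_add_sum_filter_not (range (K + 1)) (fun k => 2 * k < K) sg]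
    have hsplit2 : (range (K + 1)).filter (fun k => ¬ 2 * k < K)
        = ((range (K + 1)).filter (fun k => K < 2 * k))
          ∪ ((range (K + 1)).filter (fun k => 2 * k = K)) := by
      ext k
      simp only [Finset.mem_filter, Finset.mem_range, Finset.mem_union]
      omega
    rw [hsplit2, Finset.sum_union]
    · ring
    · rw [Finset.disjoint_left]
      intro k hk hk'
      simp only [Finset.mem_filter] at hk hk'
      omega
  have hps := ps K
  have hsum : ∑ k ∈ F, sg k + ∑ k ∈ F, sg (K - k)
      = ∑ k ∈ range (K + 1), sg k
        - ∑ k ∈ (range (K + 1)).filter (fun k => 2 * k = K), sg k := by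
    rw [hre, ← hpart]; ring
  have : ∑ k ∈ F, (sg k + sg (K - k)) = 0 := by
    rw [Finset.sum_add_distrib, hsum, hps, hmid]
    by_cases hK : K % 2 = 0 <;> simp [hK]
  rw [this] at key
  linarith

lemma qdiv (m k t : ℕ) (ht : t < m+1) : (k * (m+1) + t) / (m+1) = k := by
  rw [add_comm, Nat.add_mul_div_right _ _ (by omega : 0 < m+1), Nat.div_eq_of_lt ht, zero_add]

lemma qmod (m k t : ℕ) (ht : t < m+1) : (k * (m+1) + t) % (m+1) = t := by
  rw [add_comm, Nat.add_mul_mod_self_right, Nat.mod_eq_of_lt ht]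

lemma qrec (m x : ℕ) : (x/(m+1)) * (m+1) + x % (m+1) = x := by
  rw [Nat.mul_comm]; exact Nat.div_add_mod x (m+1)

noncomputable def RepF (S : Set ℕ) (n : ℕ) : Finset (ℕ × ℕ) :=
  ((range (n+1)) ×ˢ (range (n+1))).filter fun p => p.1 ∈ S ∧ p.2 ∈ S ∧ p.1 < p.2 ∧ p.1 + p.2 = n

lemma R_eq_RepF (S : Set ℕ) (n : ℕ) : R S n = (RepF S n).card := by
  rw [R]
  have h : {p : ℕ × ℕ | p.1 ∈ S ∧ p.2 ∈ S ∧ p.1 < p.2 ∧ p.1 + p.2 = n} = ↑(RepF S n) := by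
    ext ⟨x, y⟩
    simp only [RepF, Finset.coe_filter, Finset.mem_product, Finset.mem_range, Set.mem_setOf_eq]
    constructor
    · rintro ⟨h1, h2, h3, h4⟩; exact ⟨⟨by omega, by omega⟩, h1, h2, h3, h4⟩
    · rintro ⟨_, h⟩; exact h
  rw [h, Set.ncard_coe_finset]

lemma RepF_zero (S : Set ℕ) : RepF S 0 = ∅ := by
  ext ⟨x, y⟩
  simp only [RepF, Finset.mem_filter, Finset.mem_product, Finset.mem_range,
    Finset.notMem_empty, iff_false]
  rintro ⟨_, _, _, h, hs⟩
  omega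

def CsetD (m : ℕ) (P Q' : Set ℕ) : Set ℕ :=
  {x | (x / (m+1) ∈ A ∧ x % (m+1) ∈ P) ∨ (x / (m+1) ∉ A ∧ x % (m+1) ∈ Q')}

noncomputable def GF (m n : ℕ) (S T : Set ℕ) (K : ℕ) : Finset (ℕ × ℕ) :=
  ((range (m+1)) ×ˢ (range (m+1))).filter fun q => q.1 ∈ S ∧ q.2 ∈ T ∧ K * (m+1) + q.1 + q.2 = n

noncomputable def GdF (m n : ℕ) (S : Set ℕ) (k : ℕ) : Finset (ℕ × ℕ) :=
  ((range (m+1)) ×ˢ (range (m+1))).filter fun q =>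
    q.1 ∈ S ∧ q.2 ∈ S ∧ q.1 < q.2 ∧ (k+k) * (m+1) + q.1 + q.2 = n

lemma fiber_lt (m n : ℕ) (P Q' : Set ℕ) (k l : ℕ) (hkl : k < l) :
    ((RepF (CsetD m P Q') n).filter fun p => (p.1 / (m+1), p.2 / (m+1)) = (k, l)).card
      = (GF m n (if k ∈ A then P else Q') (if l ∈ A then P else Q') (k + l)).card := by
  apply Finset.card_bij' (fun p _ => (p.1 % (m+1), p.2 % (m+1)))
    (fun q _ => (k * (m+1) + q.1, l * (m+1) + q.2))
  · rintro ⟨x, y⟩ hp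
    simp only [RepF, CsetD, GF, Finset.mem_filter, Finset.mem_product, Finset.mem_range,
      Set.mem_setOf_eq, Prod.mk.injEq] at hp ⊢
    obtain ⟨⟨⟨hx, hy⟩, hxC, hyC, hxy, hsum⟩, hq1, hq2⟩ := hp
    refine ⟨⟨Nat.mod_lt _ (by omega), Nat.mod_lt _ (by omega)⟩, ?_, ?_, ?_⟩
    · rw [hq1] at hxC
      by_cases hk : k ∈ A
      · rw [if_pos hk]
        rcases hxC with ⟨_, h⟩ | ⟨h, _⟩
        · exact h
        · exact absurd hk h
      · rw [if_neg hk]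
        rcases hxC with ⟨h, _⟩ | ⟨_, h⟩
        · exact absurd h hk
        · exact h
    · rw [hq2] at hyC
      by_cases hl : l ∈ A
      · rw [if_pos hl]
        rcases hyC with ⟨_, h⟩ | ⟨h, _⟩
        · exact h
        · exact absurd hl h
      · rw [if_neg hl]
        rcases hyC with ⟨h, _⟩ | ⟨_, h⟩
        · exact absurd h hl
        · exact h
    · have e1 : k * (m+1) + x % (m+1) = x := by rw [← hq1]; exact qrec m x
      have e2 : l * (m+1) + y % (m+1) = y := by rw [← hq2]; exact qrec m y
      have e3 : (k + l) * (m+1) = k * (m+1) + l * (m+1) := by ring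
      omega
  · rintro ⟨s, t⟩ hq
    simp only [RepF, CsetD, GF, Finset.mem_filter, Finset.mem_product, Finset.mem_range,
      Set.mem_setOf_eq, Prod.mk.injEq] at hq ⊢
    obtain ⟨⟨hs, ht⟩, hsP, htP, hsum⟩ := hq
    have e3 : (k + l) * (m+1) = k * (m+1) + l * (m+1) := by ring
    have e4 : (k+1) * (m+1) = k * (m+1) + (m+1) := by ring
    have e5 : (k+1) * (m+1) ≤ l * (m+1) := Nat.mul_le_mul_right _ (by omega)
    refine ⟨⟨⟨by omega, by omega⟩, ?_, ?_, by omega, by omega⟩,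
      qdiv m k s hs, qdiv m l t ht⟩
    · rw [qdiv m k s hs, qmod m k s hs]
      by_cases hk : k ∈ A
      · exact Or.inl ⟨hk, by rwa [if_pos hk] at hsP⟩
      · exact Or.inr ⟨hk, by rwa [if_neg hk] at hsP⟩
    · rw [qdiv m l t ht, qmod m l t ht]
      by_cases hl : l ∈ A
      · exact Or.inl ⟨hl, by rwa [if_pos hl] at htP⟩
      · exact Or.inr ⟨hl, by rwa [if_neg hl] at htP⟩
  · rintro ⟨x, y⟩ hp
    simp only [RepF, CsetD, Finset.mem_filter, Finset.mem_product, Finset.mem_range,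
      Set.mem_setOf_eq, Prod.mk.injEq] at hp
    obtain ⟨_, hq1, hq2⟩ := hp
    have e1 : k * (m+1) + x % (m+1) = x := by rw [← hq1]; exact qrec m x
    have e2 : l * (m+1) + y % (m+1) = y := by rw [← hq2]; exact qrec m y
    simp [e1, e2]
  · rintro ⟨s, t⟩ hq
    simp only [GF, Finset.mem_filter, Finset.mem_product, Finset.mem_range] at hq
    obtain ⟨⟨hs, ht⟩, _⟩ := hq
    simp [qmod m k s hs, qmod m l t ht]

lemma fiber_diag (m n : ℕ) (P Q' : Set ℕ) (k : ℕ) :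
    ((RepF (CsetD m P Q') n).filter fun p => (p.1 / (m+1), p.2 / (m+1)) = (k, k)).card
      = (GdF m n (if k ∈ A then P else Q') k).card := by
  apply Finset.card_bij' (fun p _ => (p.1 % (m+1), p.2 % (m+1)))
    (fun q _ => (k * (m+1) + q.1, k * (m+1) + q.2))
  · rintro ⟨x, y⟩ hp
    simp only [RepF, CsetD, GdF, Finset.mem_filter, Finset.mem_product, Finset.mem_range,
      Set.mem_setOf_eq, Prod.mk.injEq] at hp ⊢
    obtain ⟨⟨⟨hx, hy⟩, hxC, hyC, hxy, hsum⟩, hq1, hq2⟩ := hp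
    have e1 : k * (m+1) + x % (m+1) = x := by rw [← hq1]; exact qrec m x
    have e2 : k * (m+1) + y % (m+1) = y := by rw [← hq2]; exact qrec m y
    have e3 : (k + k) * (m+1) = k * (m+1) + k * (m+1) := by ring
    refine ⟨⟨Nat.mod_lt _ (by omega), Nat.mod_lt _ (by omega)⟩, ?_, ?_, by omega, by omega⟩
    · rw [hq1] at hxC
      by_cases hk : k ∈ A
      · rw [if_pos hk]
        rcases hxC with ⟨_, h⟩ | ⟨h, _⟩
        · exact h
        · exact absurd hk h
      · rw [if_neg hk]
        rcases hxC with ⟨h, _⟩ | ⟨_, h⟩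
        · exact absurd h hk
        · exact h
    · rw [hq2] at hyC
      by_cases hk : k ∈ A
      · rw [if_pos hk]
        rcases hyC with ⟨_, h⟩ | ⟨h, _⟩
        · exact h
        · exact absurd hk h
      · rw [if_neg hk]
        rcases hyC with ⟨h, _⟩ | ⟨_, h⟩
        · exact absurd h hk
        · exact h
  · rintro ⟨s, t⟩ hq
    simp only [RepF, CsetD, GdF, Finset.mem_filter, Finset.mem_product, Finset.mem_range,
      Set.mem_setOf_eq, Prod.mk.injEq] at hq ⊢
    obtain ⟨⟨hs, ht⟩, hsP, htP, hst, hsum⟩ := hq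
    have e3 : (k + k) * (m+1) = k * (m+1) + k * (m+1) := by ring
    refine ⟨⟨⟨by omega, by omega⟩, ?_, ?_, by omega, by omega⟩,
      qdiv m k s hs, qdiv m k t ht⟩
    · rw [qdiv m k s hs, qmod m k s hs]
      by_cases hk : k ∈ A
      · exact Or.inl ⟨hk, by rwa [if_pos hk] at hsP⟩
      · exact Or.inr ⟨hk, by rwa [if_neg hk] at hsP⟩
    · rw [qdiv m k t ht, qmod m k t ht]
      by_cases hk : k ∈ A
      · exact Or.inl ⟨hk, by rwa [if_pos hk] at htP⟩
      · exact Or.inr ⟨hk, by rwa [if_neg hk] at htP⟩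
  · rintro ⟨x, y⟩ hp
    simp only [RepF, CsetD, Finset.mem_filter, Finset.mem_product, Finset.mem_range,
      Set.mem_setOf_eq, Prod.mk.injEq] at hp
    obtain ⟨_, hq1, hq2⟩ := hp
    have e1 : k * (m+1) + x % (m+1) = x := by rw [← hq1]; exact qrec m x
    have e2 : k * (m+1) + y % (m+1) = y := by rw [← hq2]; exact qrec m y
    simp [e1, e2]
  · rintro ⟨s, t⟩ hq
    simp only [GdF, Finset.mem_filter, Finset.mem_product, Finset.mem_range] at hq
    obtain ⟨⟨hs, ht⟩, _⟩ := hq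
    simp [qmod m k s hs, qmod m k t ht]

lemma fiber_gt (m n : ℕ) (S : Set ℕ) (k l : ℕ) (hkl : l < k) :
    ((RepF S n).filter fun p => (p.1 / (m+1), p.2 / (m+1)) = (k, l)).card = 0 := by
  rw [Finset.card_eq_zero, Finset.eq_empty_iff_forall_notMem]
  rintro ⟨x, y⟩ hp
  simp only [RepF, Finset.mem_filter, Finset.mem_product, Finset.mem_range,
    Prod.mk.injEq] at hp
  obtain ⟨⟨_, _, _, hxy, _⟩, hq1, hq2⟩ := hp
  have hdiv : x / (m+1) ≤ y / (m+1) := Nat.div_le_div_right hxy.le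
  omega

lemma GF_swap (m n : ℕ) (S T : Set ℕ) (K : ℕ) : (GF m n S T K).card = (GF m n T S K).card := by
  apply Finset.card_bij' (fun q _ => (q.2, q.1)) (fun q _ => (q.2, q.1)) <;>
    rintro ⟨s, t⟩ hq <;>
    first
    | rfl
    | (simp only [GF, Finset.mem_filter, Finset.mem_product, Finset.mem_range] at hq ⊢
       obtain ⟨⟨hs, ht⟩, h1, h2, h3⟩ := hq
       exact ⟨⟨ht, hs⟩, h2, h1, by omega⟩)

lemma GF_empty (m n : ℕ) (S T : Set ℕ) (K : ℕ) (h : n < K * (m+1)) : GF m n S T K = ∅ := by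
  rw [Finset.eq_empty_iff_forall_notMem]
  rintro ⟨s, t⟩ hq
  simp only [GF, Finset.mem_filter, Finset.mem_product, Finset.mem_range] at hq
  omega

lemma GdF_empty (m n : ℕ) (S : Set ℕ) (k : ℕ) (h : n < (k+k) * (m+1)) : GdF m n S k = ∅ := by
  rw [Finset.eq_empty_iff_forall_notMem]
  rintro ⟨s, t⟩ hq
  simp only [GdF, Finset.mem_filter, Finset.mem_product, Finset.mem_range] at hq
  omega

lemma GdF_eq_RepF (m n : ℕ) (S : Set ℕ) (k : ℕ) (hS : S ⊆ Set.Iic m)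
    (h : (k+k) * (m+1) ≤ n) : GdF m n S k = RepF S (n - (k+k) * (m+1)) := by
  ext ⟨s, t⟩
  simp only [GdF, RepF, Finset.mem_filter, Finset.mem_product, Finset.mem_range]
  constructor
  · rintro ⟨⟨hs, ht⟩, h1, h2, h3, h4⟩
    exact ⟨⟨by omega, by omega⟩, h1, h2, h3, by omega⟩
  · rintro ⟨⟨hs, ht⟩, h1, h2, h3, h4⟩
    have hs' : s ≤ m := hS h1
    have ht' : t ≤ m := hS h2
    exact ⟨⟨by omega, by omega⟩, h1, h2, h3, by omega⟩

theorem chen_lev_lemma (m r : ℕ) (hm : 2 ≤ m) (hr : r ≤ m)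
    (C₀ D₀ : Set ℕ) (hU₀ : C₀ ∪ D₀ = Set.Iic m) (hI₀ : C₀ ∩ D₀ = {r})
    (hR₀ : ∀ n : ℕ, 0 < n → R C₀ n = R D₀ n) :
    ∃ C D : Set ℕ, C ∪ D = Set.univ ∧
      C ∩ D = {n : ℕ | ∃ k : ℕ, n = r + k * (m + 1)} ∧
      ∀ n : ℕ, 0 < n → R C n = R D n := by
  refine ⟨CsetD m C₀ D₀, CsetD m D₀ C₀, ?_, ?_, ?_⟩
  · ext x
    simp only [Set.mem_union, CsetD, Set.mem_setOf_eq, Set.mem_univ, iff_true]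
    have hs : x % (m+1) ≤ m := by
      have := Nat.mod_lt x (show 0 < m+1 by omega); omega
    have hmem : x % (m+1) ∈ C₀ ∪ D₀ := by rw [hU₀]; exact Set.mem_Iic.mpr hs
    by_cases hk : x / (m+1) ∈ A
    · rcases hmem with h | h
      · exact Or.inl (Or.inl ⟨hk, h⟩)
      · exact Or.inr (Or.inl ⟨hk, h⟩)
    · rcases hmem with h | h
      · exact Or.inr (Or.inr ⟨hk, h⟩)
      · exact Or.inl (Or.inr ⟨hk, h⟩)
  · ext x
    simp only [Set.mem_inter_iff, CsetD, Set.mem_setOf_eq]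
    constructor
    · rintro ⟨h1, h2⟩
      have hx : x % (m+1) ∈ C₀ ∩ D₀ := by
        by_cases hk : x / (m+1) ∈ A
        · rcases h1 with ⟨_, h1⟩ | ⟨h, _⟩
          swap
          · exact absurd hk h
          rcases h2 with ⟨_, h2⟩ | ⟨h, _⟩
          swap
          · exact absurd hk h
          exact ⟨h1, h2⟩
        · rcases h1 with ⟨h, _⟩ | ⟨_, h1⟩
          · exact absurd h hk
          rcases h2 with ⟨h, _⟩ | ⟨_, h2⟩
          · exact absurd h hk
          exact ⟨h2, h1⟩
      rw [hI₀] at hx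
      have hxr : x % (m+1) = r := hx
      refine ⟨x / (m+1), ?_⟩
      have := qrec m x
      omega
    · rintro ⟨k, rfl⟩
      have hmod : (r + k * (m+1)) % (m+1) = r := by
        rw [Nat.add_mul_mod_self_right, Nat.mod_eq_of_lt (by omega)]
      have hrCD : r ∈ C₀ ∩ D₀ := by rw [hI₀]; rfl
      by_cases hk : (r + k * (m+1)) / (m+1) ∈ A
      · exact ⟨Or.inl ⟨hk, by rw [hmod]; exact hrCD.1⟩, Or.inl ⟨hk, by rw [hmod]; exact hrCD.2⟩⟩
      · exact ⟨Or.inr ⟨hk, by rw [hmod]; exact hrCD.2⟩, Or.inr ⟨hk, by rw [hmod]; exact hrCD.1⟩⟩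
  · intro n hn
    have hCsub : C₀ ⊆ Set.Iic m := by rw [← hU₀]; exact Set.subset_union_left
    have hDsub : D₀ ⊆ Set.Iic m := by rw [← hU₀]; exact Set.subset_union_right
    have hRF : ∀ ν, (RepF C₀ ν).card = (RepF D₀ ν).card := by
      intro ν
      rcases Nat.eq_zero_or_pos ν with h | h
      · rw [h, RepF_zero, RepF_zero]
      · have := hR₀ ν h; rwa [R_eq_RepF, R_eq_RepF] at this
    have hmaps : ∀ (S : Set ℕ), ∀ p ∈ RepF S n,
        (p.1 / (m+1), p.2 / (m+1)) ∈ (range (n+1)) ×ˢ (range (n+1)) := by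
      intro S p hp
      simp only [RepF, Finset.mem_filter, Finset.mem_product, Finset.mem_range] at hp ⊢
      have h1 := Nat.div_le_self p.1 (m+1)
      have h2 := Nat.div_le_self p.2 (m+1)
      omega
    have hfib : ∀ (S : Set ℕ), ((RepF S n).card : ℤ)
        = ∑ kl ∈ (range (n+1)) ×ˢ (range (n+1)),
            (((RepF S n).filter fun p => (p.1 / (m+1), p.2 / (m+1)) = kl).card : ℤ) := by
      intro S
      rw [Finset.card_eq_sum_card_fiberwise (hmaps S)]
      push_cast
      rfl
    suffices h : ((RepF (CsetD m C₀ D₀) n).card : ℤ) = ((RepF (CsetD m D₀ C₀) n).card : ℤ) by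
      rw [R_eq_RepF, R_eq_RepF]; exact_mod_cast h
    rw [← sub_eq_zero, hfib, hfib, ← Finset.sum_sub_distrib]
    have hterm : ∀ kl ∈ (range (n+1)) ×ˢ (range (n+1)),
        ((((RepF (CsetD m C₀ D₀) n).filter fun p => (p.1 / (m+1), p.2 / (m+1)) = kl).card : ℤ)
          - (((RepF (CsetD m D₀ C₀) n).filter fun p => (p.1 / (m+1), p.2 / (m+1)) = kl).card : ℤ))
        = if kl.1 < kl.2 ∧ ((kl.1 ∈ A) ↔ (kl.2 ∈ A)) then
            sg kl.1 * (((GF m n C₀ C₀ (kl.1 + kl.2)).card : ℤ)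
              - ((GF m n D₀ D₀ (kl.1 + kl.2)).card : ℤ))
          else 0 := by
      rintro ⟨k, l⟩ -
      rcases lt_trichotomy k l with hkl | rfl | hkl
      · rw [fiber_lt m n C₀ D₀ k l hkl, fiber_lt m n D₀ C₀ k l hkl]
        by_cases hk : k ∈ A <;> by_cases hl : l ∈ A
        · rw [if_pos hk, if_pos hl, if_pos hk, if_pos hl,
            if_pos (⟨hkl, ⟨fun _ => hl, fun _ => hk⟩⟩ :
              k < l ∧ ((k ∈ A) ↔ (l ∈ A)))]
          have hsg : sg k = 1 := by rw [sg, if_pos hk]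
          rw [hsg]; ring
        · rw [if_pos hk, if_neg hl, if_pos hk, if_neg hl,
            if_neg (fun h => hl ((h.2).mp hk) :
              ¬(k < l ∧ ((k ∈ A) ↔ (l ∈ A)))),
            GF_swap m n C₀ D₀ (k + l), sub_self]
        · rw [if_neg hk, if_pos hl, if_neg hk, if_pos hl,
            if_neg (fun h => hk ((h.2).mpr hl) :
              ¬(k < l ∧ ((k ∈ A) ↔ (l ∈ A)))),
            GF_swap m n D₀ C₀ (k + l), sub_self]
        · rw [if_neg hk, if_neg hl, if_neg hk, if_neg hl,
            if_pos (⟨hkl, ⟨fun h => absurd h hk, fun h => absurd h hl⟩⟩ :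
              k < l ∧ ((k ∈ A) ↔ (l ∈ A)))]
          have hsg : sg k = -1 := by rw [sg, if_neg hk]
          rw [hsg]; ring
      · rw [fiber_diag m n C₀ D₀ k, fiber_diag m n D₀ C₀ k,
          if_neg (fun h => lt_irrefl k h.1 : ¬(k < k ∧ ((k ∈ A) ↔ (k ∈ A))))]
        have hGd : (GdF m n C₀ k).card = (GdF m n D₀ k).card := by
          by_cases hkn : (k + k) * (m+1) ≤ n
          · rw [GdF_eq_RepF m n C₀ k hCsub hkn, GdF_eq_RepF m n D₀ k hDsub hkn]
            exact hRF _
          · rw [GdF_empty m n C₀ k (by omega), GdF_empty m n D₀ k (by omega)]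
        by_cases hk : k ∈ A
        · rw [if_pos hk, if_pos hk, hGd, sub_self]
        · rw [if_neg hk, if_neg hk, ← hGd, sub_self]
      · rw [fiber_gt m n _ k l hkl, fiber_gt m n _ k l hkl,
          if_neg (fun h => absurd h.1 (by omega) : ¬(k < l ∧ ((k ∈ A) ↔ (l ∈ A))))]
        simp
    rw [Finset.sum_congr rfl hterm, ← Finset.sum_filter]
    have hmaps2 : ∀ kl ∈ ((range (n+1)) ×ˢ (range (n+1))).filter
        (fun kl => kl.1 < kl.2 ∧ ((kl.1 ∈ A) ↔ (kl.2 ∈ A))),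
        kl.1 + kl.2 ∈ range (2*n+2) := by
      intro kl hkl
      simp only [Finset.mem_filter, Finset.mem_product, Finset.mem_range] at hkl ⊢
      omega
    rw [← Finset.sum_fiberwise_of_maps_to hmaps2]
    apply Finset.sum_eq_zero
    intro K hK
    have hinner : ∀ kl ∈ (((range (n+1)) ×ˢ (range (n+1))).filter
        (fun kl => kl.1 < kl.2 ∧ ((kl.1 ∈ A) ↔ (kl.2 ∈ A)))).filter
          (fun kl => kl.1 + kl.2 = K),
        sg kl.1 * (((GF m n C₀ C₀ (kl.1 + kl.2)).card : ℤ)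
            - ((GF m n D₀ D₀ (kl.1 + kl.2)).card : ℤ))
        = sg kl.1 * (((GF m n C₀ C₀ K).card : ℤ) - ((GF m n D₀ D₀ K).card : ℤ)) := by
      intro kl hkl
      have h : kl.1 + kl.2 = K := (Finset.mem_filter.mp hkl).2
      rw [h]
    rw [Finset.sum_congr rfl hinner, ← Finset.sum_mul]
    by_cases hKn : K * (m+1) ≤ n
    · have hKn' : K ≤ n := by
        calc K = K * 1 := by ring
        _ ≤ K * (m+1) := Nat.mul_le_mul_left K (by omega)
        _ ≤ n := hKn
      have hre : ∑ kl ∈ (((range (n+1)) ×ˢ (range (n+1))).filter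
          (fun kl => kl.1 < kl.2 ∧ ((kl.1 ∈ A) ↔ (kl.2 ∈ A)))).filter
            (fun kl => kl.1 + kl.2 = K),
          sg kl.1
          = ∑ k ∈ (range (K + 1)).filter
              (fun k => 2 * k < K ∧ ((k ∈ A) ↔ (K - k) ∈ A)), sg k := by
        apply Finset.sum_nbij' (fun kl => kl.1) (fun k => (k, K - k))
        · rintro ⟨a, b⟩ h
          simp only [Finset.mem_filter, Finset.mem_product, Finset.mem_range] at h ⊢
          obtain ⟨⟨⟨ha, hb⟩, hab, hiff⟩, hsum⟩ := h
          refine ⟨by omega, by omega, ?_⟩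
          have hKa : K - a = b := by omega
          rw [hKa]; exact hiff
        · intro k h
          simp only [Finset.mem_filter, Finset.mem_range] at h
          obtain ⟨hk, h2k, hiff⟩ := h
          simp only [Finset.mem_filter, Finset.mem_product, Finset.mem_range]
          exact ⟨⟨⟨by omega, by omega⟩, by omega, hiff⟩, by omega⟩
        · rintro ⟨a, b⟩ h
          simp only [Finset.mem_filter, Finset.mem_product, Finset.mem_range] at h
          obtain ⟨⟨⟨ha, hb⟩, hab, hiff⟩, hsum⟩ := h
          have hKa : K - a = b := by omega
          simp [hKa]
        · intro k h
          rfl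
        · intro kl _
          rfl
      rw [hre, tm_s7 K, zero_mul]
    · have h1 : GF m n C₀ C₀ K = ∅ := GF_empty _ _ _ _ _ (by omega)
      have h2 : GF m n D₀ D₀ K = ∅ := GF_empty _ _ _ _ _ (by omega)
      rw [h1, h2]
      simp
end

section
/- For every positive integer l, setting C = A_{2l} ∪ (2^{2l} − 1 + B_{2l}) and D = B_{2l} ∪ (2^{2l} − 1 + A_{2l}), one has C ∪ D = [0, 2^{2l+1} − 2], C ∩ D = {2^{2l} − 1}, 0 ∈ C, and R_C(n) = R_D(n) for every positive integer n. -/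
/-- `Af l = A ∩ [0, 2^l − 1]`. -/
def Af (l : ℕ) : Set ℕ := A ∩ Set.Iic (2 ^ l - 1)

/-- `Bf l = B ∩ [0, 2^l − 1]`. -/
def Bf (l : ℕ) : Set ℕ := B ∩ Set.Iic (2 ^ l - 1)

/-- `shift a S = a + S = {a + s : s ∈ S}`. -/
def shift (a : ℕ) (S : Set ℕ) : Set ℕ := (a + ·) '' S


/-!
The halves of the Thue–Morse set split as `Af (l+1) = Af l ∪ (2^l + Bf l)` and
`Bf (l+1) = Bf l ∪ (2^l + Af l)`. If `R X = R Y` and every element of `X` lies below every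
element of `a + Y` and vice versa, then `R (X ∪ (a + Y)) = R (Y ∪ (a + X))`: each side splits
into `R X`, the number of mixed sums `x + (a + y)`, and `R (a + Y)`, and the mixed sums match
under `x + (a + y) = y + (a + x)`. Induction on `l` gives `R (Af l) = R (Bf l)`, and one more
application with `a = 2^(2l) - 1` gives `R C = R D`. The order condition holds there because
`0 ∈ A` and `2^(2l) - 1`, having `2l` binary ones, lies in `A`.
-/

open Set

theorem mem_shift {a x : ℕ} {S : Set ℕ} : x ∈ shift a S ↔ ∃ s ∈ S, a + s = x := Iff.rfl

theorem shift_union (a : ℕ) (S T : Set ℕ) : shift a (S ∪ T) = shift a S ∪ shift a T :=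
  image_union _ _ _

theorem mem_Iic_two_pow_sub_one {l x : ℕ} : x ∈ Iic (2 ^ l - 1) ↔ x < 2 ^ l := by
  have := Nat.two_pow_pos l
  rw [mem_Iic]
  omega

theorem digits_two_sum_eq_mod_add_div (n : ℕ) :
    (Nat.digits 2 n).sum = n % 2 + (Nat.digits 2 (n / 2)).sum := by
  rcases eq_or_ne n 0 with rfl | hn
  · simp
  · rw [Nat.digits_eq_cons_digits_div (by norm_num) hn, List.sum_cons]

theorem digits_two_sum_two_pow_add {l y : ℕ} (hy : y < 2 ^ l) :
    (Nat.digits 2 (2 ^ l + y)).sum = (Nat.digits 2 y).sum + 1 := by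
  induction l generalizing y with
  | zero =>
    obtain rfl : y = 0 := by simpa using hy
    simp
  | succ l ih =>
    have hpow : 2 ^ (l + 1) = 2 * 2 ^ l := by ring
    rw [digits_two_sum_eq_mod_add_div, digits_two_sum_eq_mod_add_div y,
      show (2 ^ (l + 1) + y) / 2 = 2 ^ l + y / 2 by omega, ih (by omega)]
    omega

theorem digits_two_sum_two_pow_sub_one (l : ℕ) : (Nat.digits 2 (2 ^ l - 1)).sum = l := by
  induction l with
  | zero => simp
  | succ l ih =>
    have hpos := Nat.two_pow_pos l
    rw [show 2 ^ (l + 1) - 1 = 2 ^ l + (2 ^ l - 1) by rw [pow_succ]; omega,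
      digits_two_sum_two_pow_add (by omega), ih]

theorem zero_mem_A : 0 ∈ A := by simp [A]

theorem two_pow_two_mul_sub_one_mem_A (l : ℕ) : 2 ^ (2 * l) - 1 ∈ A := by
  show Even (Nat.digits 2 _).sum
  rw [digits_two_sum_two_pow_sub_one]
  exact even_two_mul l

theorem two_pow_add_mem_A_iff {l y : ℕ} (hy : y < 2 ^ l) : 2 ^ l + y ∈ A ↔ y ∈ B := by
  show Even (Nat.digits 2 (2 ^ l + y)).sum ↔ ¬ Even (Nat.digits 2 y).sum
  rw [digits_two_sum_two_pow_add hy, Nat.even_add_one]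

theorem two_pow_add_mem_B_iff {l y : ℕ} (hy : y < 2 ^ l) : 2 ^ l + y ∈ B ↔ y ∈ A := by
  rw [B, mem_compl_iff, two_pow_add_mem_A_iff hy, B, notMem_compl_iff]

theorem inter_Iic_two_pow_succ_sub_one {P Q : Set ℕ} {l : ℕ}
    (h : ∀ y < 2 ^ l, 2 ^ l + y ∈ P ↔ y ∈ Q) :
    P ∩ Iic (2 ^ (l + 1) - 1) = P ∩ Iic (2 ^ l - 1) ∪ shift (2 ^ l) (Q ∩ Iic (2 ^ l - 1)) := by
  have hpow : 2 ^ (l + 1) = 2 * 2 ^ l := by ring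
  ext x
  simp only [mem_union, mem_inter_iff, mem_Iic_two_pow_sub_one, mem_shift]
  constructor
  · rintro ⟨hx, hlt⟩
    by_cases hsmall : x < 2 ^ l
    · exact Or.inl ⟨hx, hsmall⟩
    · obtain ⟨y, rfl⟩ := Nat.exists_eq_add_of_le (not_lt.1 hsmall)
      exact Or.inr ⟨y, ⟨(h y (by omega)).1 hx, by omega⟩, rfl⟩
  · rintro (⟨hx, hlt⟩ | ⟨y, ⟨hy, hlt⟩, rfl⟩)
    · exact ⟨hx, by omega⟩
    · exact ⟨(h y hlt).2 hy, by omega⟩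

theorem Af_succ (l : ℕ) : Af (l + 1) = Af l ∪ shift (2 ^ l) (Bf l) :=
  inter_Iic_two_pow_succ_sub_one fun _ => two_pow_add_mem_A_iff

theorem Bf_succ (l : ℕ) : Bf (l + 1) = Bf l ∪ shift (2 ^ l) (Af l) :=
  inter_Iic_two_pow_succ_sub_one fun _ => two_pow_add_mem_B_iff

theorem Af_union_Bf (l : ℕ) : Af l ∪ Bf l = Iic (2 ^ l - 1) := by
  rw [Af, Bf, B, ← union_inter_distrib_right, union_compl_self, univ_inter]

theorem pos_of_mem_Bf {l y : ℕ} (hy : y ∈ Bf l) : 0 < y :=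
  Nat.pos_of_ne_zero fun h => hy.1 (h ▸ zero_mem_A)

theorem lt_of_mem_Bf_two_mul {l y : ℕ} (hy : y ∈ Bf (2 * l)) : y < 2 ^ (2 * l) - 1 :=
  lt_of_le_of_ne hy.2 fun h => hy.1 (h ▸ two_pow_two_mul_sub_one_mem_A l)

noncomputable def crossCount (X Y : Set ℕ) (n : ℕ) : ℕ :=
  {p : ℕ × ℕ | p.1 ∈ X ∧ p.2 ∈ Y ∧ p.1 + p.2 = n}.ncard

theorem crossCount_comm (X Y : Set ℕ) (n : ℕ) : crossCount X Y n = crossCount Y X n := by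
  rw [crossCount, crossCount, ← ncard_image_of_injective _ Prod.swap_injective]
  congr 1
  ext ⟨x, y⟩
  simp only [mem_image, mem_ofPred_eq, Prod.exists, Prod.swap_prod_mk, Prod.mk.injEq]
  constructor
  · rintro ⟨a, b, ⟨ha, hb, hsum⟩, rfl, rfl⟩
    exact ⟨hb, ha, by omega⟩
  · rintro ⟨hx, hy, hsum⟩
    exact ⟨y, x, ⟨hy, hx, by omega⟩, rfl, rfl⟩

theorem crossCount_shift (a k : ℕ) (X Y : Set ℕ) :
    crossCount X (shift a Y) (a + k) = crossCount X Y k := by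
  symm
  rw [crossCount, crossCount, ← ncard_image_of_injective _
    (Prod.map_injective.2 ⟨Function.injective_id, add_right_injective a⟩)]
  congr 1
  ext ⟨x, z⟩
  simp only [mem_image, mem_ofPred_eq, Prod.exists, Prod.map_apply, id, Prod.mk.injEq, mem_shift]
  constructor
  · rintro ⟨x, y, ⟨hx, hy, hsum⟩, rfl, rfl⟩
    exact ⟨hx, ⟨y, hy, rfl⟩, by omega⟩
  · rintro ⟨hx, ⟨y, hy, rfl⟩, hsum⟩
    exact ⟨x, y, ⟨hx, hy, by omega⟩, rfl, rfl⟩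

theorem crossCount_shift_of_lt {a n : ℕ} (X Y : Set ℕ) (h : n < a) :
    crossCount X (shift a Y) n = 0 := by
  rw [crossCount, ← ncard_empty (ℕ × ℕ)]
  congr 1
  refine eq_empty_of_forall_notMem ?_
  rintro ⟨x, _⟩ ⟨_, ⟨y, _, rfl⟩, hsum⟩
  dsimp only at hsum
  omega

theorem crossCount_shift_swap (a n : ℕ) (X Y : Set ℕ) :
    crossCount X (shift a Y) n = crossCount Y (shift a X) n := by
  rcases lt_or_ge n a with h | h
  · rw [crossCount_shift_of_lt _ _ h, crossCount_shift_of_lt _ _ h]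
  · obtain ⟨k, rfl⟩ := Nat.exists_eq_add_of_le h
    rw [crossCount_shift, crossCount_shift, crossCount_comm]

theorem R_shift (a k : ℕ) (S : Set ℕ) : R (shift a S) (2 * a + k) = R S k := by
  symm
  rw [R, R, ← ncard_image_of_injective _
    (Prod.map_injective.2 ⟨add_right_injective a, add_right_injective a⟩)]
  congr 1
  ext ⟨u, v⟩
  simp only [mem_image, mem_ofPred_eq, Prod.exists, Prod.map_apply, Prod.mk.injEq, mem_shift]
  constructor
  · rintro ⟨x, y, ⟨hx, hy, hlt, hsum⟩, rfl, rfl⟩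
    exact ⟨⟨x, hx, rfl⟩, ⟨y, hy, rfl⟩, by omega, by omega⟩
  · rintro ⟨⟨x, hx, rfl⟩, ⟨y, hy, rfl⟩, hlt, hsum⟩
    exact ⟨x, y, ⟨hx, hy, by omega, by omega⟩, rfl, rfl⟩

theorem R_shift_of_lt {a n : ℕ} (S : Set ℕ) (h : n < 2 * a) : R (shift a S) n = 0 := by
  rw [R, ← ncard_empty (ℕ × ℕ)]
  congr 1
  refine eq_empty_of_forall_notMem ?_
  rintro ⟨_, _⟩ ⟨⟨x, _, rfl⟩, ⟨y, _, rfl⟩, _, hsum⟩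
  dsimp only at hsum
  omega

theorem R_shift_congr {X Y : Set ℕ} (hR : ∀ n, R X n = R Y n) (a n : ℕ) :
    R (shift a X) n = R (shift a Y) n := by
  rcases lt_or_ge n (2 * a) with h | h
  · rw [R_shift_of_lt _ h, R_shift_of_lt _ h]
  · obtain ⟨k, rfl⟩ := Nat.exists_eq_add_of_le h
    rw [R_shift, R_shift, hR]

theorem R_eq_zero_of_subsingleton {S : Set ℕ} (hS : S.Subsingleton) (n : ℕ) : R S n = 0 := by
  rw [R, ← ncard_empty (ℕ × ℕ)]
  congr 1
  refine eq_empty_of_forall_notMem ?_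
  rintro ⟨x, y⟩ ⟨hx, hy, hlt, -⟩
  exact hlt.ne (hS hx hy)

theorem R_union_of_lt {S T : Set ℕ} (h : ∀ s ∈ S, ∀ t ∈ T, s < t) (n : ℕ) :
    R (S ∪ T) n = R S n + crossCount S T n + R T n := by
  have hfin : ∀ P : Set (ℕ × ℕ), (∀ p ∈ P, p.1 + p.2 = n) → P.Finite := fun P hP =>
    ((finite_Iic n).prod (finite_Iic n)).subset fun p hp => by
      have := hP p hp
      exact ⟨mem_Iic.2 (by omega), mem_Iic.2 (by omega)⟩
  have hST : ∀ x ∈ S, x ∉ T := fun x hs ht => (h x hs x ht).false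
  set RS := {p : ℕ × ℕ | p.1 ∈ S ∧ p.2 ∈ S ∧ p.1 < p.2 ∧ p.1 + p.2 = n}
  set RT := {p : ℕ × ℕ | p.1 ∈ T ∧ p.2 ∈ T ∧ p.1 < p.2 ∧ p.1 + p.2 = n}
  set RST := {p : ℕ × ℕ | p.1 ∈ S ∧ p.2 ∈ T ∧ p.1 + p.2 = n}
  have hsplit : {p : ℕ × ℕ | p.1 ∈ S ∪ T ∧ p.2 ∈ S ∪ T ∧ p.1 < p.2 ∧ p.1 + p.2 = n} =
      RS ∪ RST ∪ RT := by
    ext ⟨x, y⟩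
    simp only [RS, RT, RST, mem_union, mem_ofPred_eq]
    constructor
    · rintro ⟨hx | hx, hy | hy, hlt, hsum⟩
      · exact Or.inl (Or.inl ⟨hx, hy, hlt, hsum⟩)
      · exact Or.inl (Or.inr ⟨hx, hy, hsum⟩)
      · exact absurd (h y hy x hx) hlt.not_gt
      · exact Or.inr ⟨hx, hy, hlt, hsum⟩
    · rintro ((⟨hx, hy, hlt, hsum⟩ | ⟨hx, hy, hsum⟩) | ⟨hx, hy, hlt, hsum⟩)
      · exact ⟨Or.inl hx, Or.inl hy, hlt, hsum⟩
      · exact ⟨Or.inl hx, Or.inr hy, h x hx y hy, hsum⟩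
      · exact ⟨Or.inr hx, Or.inr hy, hlt, hsum⟩
  have hRS : RS.Finite := hfin _ fun p hp => hp.2.2.2
  have hRT : RT.Finite := hfin _ fun p hp => hp.2.2.2
  have hRST : RST.Finite := hfin _ fun p hp => hp.2.2
  have hdisj₁ : Disjoint RS RST := disjoint_left.2 fun p hp hp' => hST _ hp.2.1 hp'.2.1
  have hdisj₂ : Disjoint (RS ∪ RST) RT :=
    disjoint_left.2 fun p hp hp' => hST _ (hp.elim (·.1) (·.1)) hp'.1
  rw [R, hsplit, ncard_union_eq hdisj₂ (hRS.union hRST) hRT, ncard_union_eq hdisj₁ hRS hRST]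
  rfl

theorem R_union_shift_eq_of_R_eq {X Y : Set ℕ} {a : ℕ} (hR : ∀ n, R X n = R Y n)
    (hXY : ∀ x ∈ X, ∀ y ∈ Y, x < a + y) (hYX : ∀ y ∈ Y, ∀ x ∈ X, y < a + x) (n : ℕ) :
    R (X ∪ shift a Y) n = R (Y ∪ shift a X) n := by
  have hX : ∀ x ∈ X, ∀ z ∈ shift a Y, x < z := by
    rintro x hx _ ⟨y, hy, rfl⟩
    exact hXY x hx y hy
  have hY : ∀ y ∈ Y, ∀ z ∈ shift a X, y < z := by
    rintro y hy _ ⟨x, hx, rfl⟩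
    exact hYX y hy x hx
  rw [R_union_of_lt hX, R_union_of_lt hY, hR, crossCount_shift_swap, R_shift_congr hR]

theorem R_Af_eq_R_Bf (l n : ℕ) : R (Af l) n = R (Bf l) n := by
  induction l generalizing n with
  | zero =>
    have hsub : ∀ S : Set ℕ, (S ∩ Iic (2 ^ 0 - 1)).Subsingleton := fun S x hx y hy => by
      have := mem_Iic_two_pow_sub_one.1 hx.2
      have := mem_Iic_two_pow_sub_one.1 hy.2
      omega
    rw [Af, Bf, R_eq_zero_of_subsingleton (hsub A), R_eq_zero_of_subsingleton (hsub B)]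
  | succ l ih =>
    have hlt : ∀ {S : Set ℕ}, ∀ x ∈ S ∩ Iic (2 ^ l - 1), ∀ y, x < 2 ^ l + y :=
      fun x hx _ => (mem_Iic_two_pow_sub_one.1 hx.2).trans_le le_self_add
    rw [Af_succ, Bf_succ]
    exact R_union_shift_eq_of_R_eq ih (fun x hx y _ => hlt x hx y) (fun y hy x _ => hlt y hy x) n

def C (l : ℕ) : Set ℕ := Af l ∪ shift (2 ^ l - 1) (Bf l)

def D (l : ℕ) : Set ℕ := Bf l ∪ shift (2 ^ l - 1) (Af l)

theorem zero_mem_C (l : ℕ) : 0 ∈ C l := Or.inl ⟨zero_mem_A, mem_Iic.2 (Nat.zero_le _)⟩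

theorem Iic_union_shift_Iic (m : ℕ) : Iic m ∪ shift m (Iic m) = Iic (2 * m) := by
  ext x
  simp only [mem_union, mem_Iic, mem_shift]
  constructor
  · rintro (hx | ⟨y, hy, rfl⟩) <;> omega
  · intro hx
    by_cases hxm : x ≤ m
    · exact Or.inl hxm
    · exact Or.inr ⟨x - m, by omega, by omega⟩

theorem C_union_D (l : ℕ) : C l ∪ D l = Iic (2 ^ (l + 1) - 2) := by
  rw [C, D, union_union_union_comm, ← shift_union, union_comm (Bf l), Af_union_Bf,
    Iic_union_shift_Iic, pow_succ, Nat.mul_sub_one, mul_comm]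

theorem C_inter_D (l : ℕ) : C (2 * l) ∩ D (2 * l) = {2 ^ (2 * l) - 1} := by
  set m := 2 ^ (2 * l) - 1
  ext x
  simp only [C, D, mem_inter_iff, mem_union, mem_shift, mem_singleton_iff]
  constructor
  · rintro ⟨⟨hxA, hxm⟩ | ⟨s, hs, rfl⟩, ⟨hxB, hxm⟩ | ⟨t, ⟨htA, -⟩, ht⟩⟩
    · exact absurd hxA hxB
    · exact le_antisymm hxm (ht ▸ le_self_add)
    · exact ((lt_add_of_pos_right m (pos_of_mem_Bf hs)).not_ge hxm).elim
    · exact absurd (add_left_cancel ht ▸ htA) hs.1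
  · rintro rfl
    exact ⟨Or.inl ⟨two_pow_two_mul_sub_one_mem_A l, mem_Iic.2 le_rfl⟩,
      Or.inr ⟨0, ⟨zero_mem_A, mem_Iic.2 (Nat.zero_le _)⟩, add_zero m⟩⟩

theorem R_C_eq_R_D (l n : ℕ) : R (C (2 * l)) n = R (D (2 * l)) n :=
  R_union_shift_eq_of_R_eq (R_Af_eq_R_Bf _)
    (fun _ hx _ hy => (mem_Iic.1 hx.2).trans_lt (lt_add_of_pos_right _ (pos_of_mem_Bf hy)))
    (fun _ hy _ _ => (lt_of_mem_Bf_two_mul hy).trans_le le_self_add) n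

theorem chen_lev_construction_general (l : ℕ) :
    (Af (2 * l) ∪ shift (2 ^ (2 * l) - 1) (Bf (2 * l))) ∪
        (Bf (2 * l) ∪ shift (2 ^ (2 * l) - 1) (Af (2 * l))) =
      Set.Iic (2 ^ (2 * l + 1) - 2) ∧
    (Af (2 * l) ∪ shift (2 ^ (2 * l) - 1) (Bf (2 * l))) ∩
        (Bf (2 * l) ∪ shift (2 ^ (2 * l) - 1) (Af (2 * l))) =
      {2 ^ (2 * l) - 1} ∧
    (0 : ℕ) ∈ Af (2 * l) ∪ shift (2 ^ (2 * l) - 1) (Bf (2 * l)) ∧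
    ∀ n : ℕ, 0 < n →
      R (Af (2 * l) ∪ shift (2 ^ (2 * l) - 1) (Bf (2 * l))) n =
        R (Bf (2 * l) ∪ shift (2 ^ (2 * l) - 1) (Af (2 * l))) n :=
  ⟨C_union_D _, C_inter_D l, zero_mem_C _, fun n _ => R_C_eq_R_D l n⟩

theorem chen_lev_construction (l : ℕ) (hl : 0 < l) :
    (Af (2 * l) ∪ shift (2 ^ (2 * l) - 1) (Bf (2 * l))) ∪
        (Bf (2 * l) ∪ shift (2 ^ (2 * l) - 1) (Af (2 * l))) =
      Set.Iic (2 ^ (2 * l + 1) - 2) ∧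
    (Af (2 * l) ∪ shift (2 ^ (2 * l) - 1) (Bf (2 * l))) ∩
        (Bf (2 * l) ∪ shift (2 ^ (2 * l) - 1) (Af (2 * l))) =
      {2 ^ (2 * l) - 1} ∧
    (0 : ℕ) ∈ Af (2 * l) ∪ shift (2 ^ (2 * l) - 1) (Bf (2 * l)) ∧
    ∀ n : ℕ, 0 < n →
      R (Af (2 * l) ∪ shift (2 ^ (2 * l) - 1) (Bf (2 * l))) n =
        R (Bf (2 * l) ∪ shift (2 ^ (2 * l) - 1) (Af (2 * l))) n :=
  chen_lev_construction_general l
end
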